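/- Assume the closed interval [(σ−c)/a, (σ+c)/a] is contained in (−v_⋆, v_⋆). Then there exists w₁* > 0 such that for every v₀ ∈ ((σ−c)/a, (σ+c)/a), every w₀ with 0 < w₀ < w₁*, and every s₀ ∈ ℝ, every maximal solution (w, v) of (FS) with w(s₀) = w₀, v(s₀) = v₀ is defined on an interval (s_−, s_+) with −∞ < s_− < s_+ < +∞ and verifies: (i) v(s) → (σ−c)/a as s → s_−⁺ and v(s) → (σ+c)/a as s → s_+⁻; (ii) v extends to a C¹ function on [s_−, s_+] and v'(s) > 0 for all s; (iii) w(s) converges to finite positive limits as s → s_−⁺ and as s → s_+⁻; (iv) w'(s) → −∞ as s → s_−⁺ and w'(s) → +∞ as s → s_+⁻. -/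

import Mathlib

open Set Filter Topology

/-- The inverse `g = Φ⁻¹` of the relativistic flux limiter
`Φ(s) = μ s / √(1 + (μ/c)² s²)`, given by `g(y) = c y / (μ √(c² − y²))`
for `y ∈ (−c, c)`. -/
noncomputable def fsG (μ c : ℝ) (y : ℝ) : ℝ := c * y / (μ * Real.sqrt (c ^ 2 - y ^ 2))

/-- A solution of the flux-saturated traveling-wave system (FS)
`w' = w (g(a v − σ) − v)`, `v' = λ/γ − v² − w/γ`, with `w > 0` and
`v ∈ ((σ−c)/a, (σ+c)/a)`, on the open interval `(sm, sp)`. -/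
def IsFSSol (a σ γ lam μ c : ℝ) (sm sp : EReal) (w v : ℝ → ℝ) : Prop :=
  sm < sp ∧
  ∀ s : ℝ, sm < (s : EReal) → (s : EReal) < sp →
    0 < w s ∧ (σ - c) / a < v s ∧ v s < (σ + c) / a ∧
    HasDerivAt w (w s * (fsG μ c (a * v s - σ) - v s)) s ∧
    HasDerivAt v (lam / γ - v s ^ 2 - w s / γ) s

/-- A maximal solution of (FS): it cannot be extended (with `w > 0` and
`v ∈ ((σ−c)/a, (σ+c)/a)`) to any strictly larger open interval. -/
def IsMaxFSSol (a σ γ lam μ c : ℝ) (sm sp : EReal) (w v : ℝ → ℝ) : Prop :=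
  IsFSSol a σ γ lam μ c sm sp w v ∧
  ∀ (tm tp : EReal) (w₁ v₁ : ℝ → ℝ),
    tm ≤ sm → sp ≤ tp → (tm < sm ∨ sp < tp) →
    (∀ s : ℝ, sm < (s : EReal) → (s : EReal) < sp → w₁ s = w s ∧ v₁ s = v s) →
    ¬ IsFSSol a σ γ lam μ c tm tp w₁ v₁

namespace FS18

structure P where
  a : ℝ
  sg : ℝ
  ga : ℝ
  lam : ℝ
  mu : ℝ
  c : ℝ

namespace P

variable (p : P)

noncomputable def al : ℝ := (p.sg - p.c) / p.a
noncomputable def be : ℝ := (p.sg + p.c) / p.a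
noncomputable def vb : ℝ := max |p.al| |p.be|
noncomputable def de : ℝ := p.lam / p.ga - p.vb ^ 2
noncomputable def W : ℝ := p.ga * p.de / 2
noncomputable def phi (x : ℝ) : ℝ := Real.sqrt (p.c ^ 2 - (p.a * x - p.sg) ^ 2)
noncomputable def psi (x : ℝ) : ℝ := if p.a * x ≤ p.sg then p.phi x else 2 * p.c - p.phi x
noncomputable def dpsi (x : ℝ) : ℝ := p.a * |p.a * x - p.sg| / p.phi x
noncomputable def chi (x : ℝ) : ℝ := (2 / p.de) * ((p.c / (p.a * p.mu)) * p.psi x + p.vb * x)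
noncomputable def dchi (x : ℝ) : ℝ := (2 / p.de) * ((p.c / (p.a * p.mu)) * p.dpsi x + p.vb)
noncomputable def Cchi : ℝ := (2 / p.de) * ((p.c / (p.a * p.mu)) * (2 * p.c) + p.vb * (p.be - p.al))
noncomputable def wst : ℝ := p.W / 2 * Real.exp (-p.Cchi)

def Good : Prop :=
  0 < p.a ∧ 0 < p.sg ∧ 0 < p.ga ∧ 0 < p.lam ∧ 0 < p.mu ∧ 0 < p.c ∧
    Icc p.al p.be ⊆ Ioo (-Real.sqrt (p.lam / p.ga)) (Real.sqrt (p.lam / p.ga))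

variable {p}

lemma Good.ha (hp : p.Good) : 0 < p.a := hp.1
lemma Good.hga (hp : p.Good) : 0 < p.ga := hp.2.2.1
lemma Good.hlam (hp : p.Good) : 0 < p.lam := hp.2.2.2.1
lemma Good.hmu (hp : p.Good) : 0 < p.mu := hp.2.2.2.2.1
lemma Good.hc (hp : p.Good) : 0 < p.c := hp.2.2.2.2.2.1

lemma Good.albe (hp : p.Good) : p.al < p.be := by
  have := hp.ha; have := hp.hc
  rw [al, be]
  have h1 := hp.ha; have h2 := hp.hc
  gcongr
  linarith

lemma Good.vb_lt (hp : p.Good) : p.vb < Real.sqrt (p.lam / p.ga) := by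
  have h1 := hp.2.2.2.2.2.2 (left_mem_Icc.2 hp.albe.le)
  have h2 := hp.2.2.2.2.2.2 (right_mem_Icc.2 hp.albe.le)
  rw [mem_Ioo] at h1 h2
  rw [vb, max_lt_iff, abs_lt, abs_lt]
  exact ⟨⟨h1.1, h1.2⟩, ⟨h2.1, h2.2⟩⟩

lemma Good.vb_nonneg (hp : p.Good) : 0 ≤ p.vb := le_trans (abs_nonneg _) (le_max_left _ _)

lemma Good.hde (hp : p.Good) : 0 < p.de := by
  have h := hp.vb_lt
  have h0 : 0 ≤ p.vb := hp.vb_nonneg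
  have : p.vb ^ 2 < Real.sqrt (p.lam / p.ga) ^ 2 := by
    have hs : 0 ≤ Real.sqrt (p.lam / p.ga) := Real.sqrt_nonneg _
    nlinarith
  rw [Real.sq_sqrt (div_pos hp.hlam hp.hga).le] at this
  rw [de]; linarith

lemma Good.hW (hp : p.Good) : 0 < p.W := by
  have := hp.hde; have := hp.hga; rw [W]; positivity

lemma Good.abs_le_vb (hp : p.Good) {x : ℝ} (hx : x ∈ Icc p.al p.be) : |x| ≤ p.vb := by
  rcases hx with ⟨h1, h2⟩
  rw [abs_le]
  constructor
  · have : -|p.al| ≤ p.al := neg_abs_le _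
    calc -p.vb ≤ -|p.al| := by rw [vb]; simp [neg_le_neg_iff]
    _ ≤ p.al := neg_abs_le _
    _ ≤ x := h1
  · calc x ≤ p.be := h2
    _ ≤ |p.be| := le_abs_self _
    _ ≤ p.vb := le_max_right _ _

lemma Good.de_le (hp : p.Good) {x : ℝ} (hx : x ∈ Icc p.al p.be) :
    p.de ≤ p.lam / p.ga - x ^ 2 := by
  have h := hp.abs_le_vb hx
  have h0 : 0 ≤ p.vb := hp.vb_nonneg
  have : x ^ 2 ≤ p.vb ^ 2 := by nlinarith [abs_nonneg x, sq_abs x, neg_abs_le x, le_abs_self x]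
  rw [de]; linarith

lemma Good.sq_pos (hp : p.Good) {x : ℝ} (hx : x ∈ Ioo p.al p.be) :
    0 < p.c ^ 2 - (p.a * x - p.sg) ^ 2 := by
  rcases hx with ⟨h1, h2⟩
  rw [al, div_lt_iff₀ hp.ha] at h1
  rw [be, lt_div_iff₀ hp.ha] at h2
  nlinarith

lemma Good.phi_pos (hp : p.Good) {x : ℝ} (hx : x ∈ Ioo p.al p.be) : 0 < p.phi x :=
  Real.sqrt_pos.2 (hp.sq_pos hx)

lemma phi_le (p : P) (hc : 0 ≤ p.c) (x : ℝ) : p.phi x ≤ p.c := by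
  rw [phi]
  calc Real.sqrt (p.c ^ 2 - (p.a * x - p.sg) ^ 2) ≤ Real.sqrt (p.c ^ 2) :=
        Real.sqrt_le_sqrt (by nlinarith)
  _ = p.c := by rw [Real.sqrt_sq hc]

lemma phi_nonneg (p : P) (x : ℝ) : 0 ≤ p.phi x := Real.sqrt_nonneg _

lemma psi_nonneg (p : P) (hc : 0 ≤ p.c) (x : ℝ) : 0 ≤ p.psi x := by
  rw [psi]; split
  · exact p.phi_nonneg x
  · have := p.phi_le hc x; linarith

lemma psi_le (p : P) (hc : 0 ≤ p.c) (x : ℝ) : p.psi x ≤ 2 * p.c := by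
  rw [psi]; split
  · have := p.phi_le hc x; linarith
  · have := p.phi_nonneg x; linarith

end P

end FS18

namespace FS18

namespace P

variable {p : P}

lemma Good.hasDerivAt_phi (hp : p.Good) {x : ℝ} (hx : x ∈ Ioo p.al p.be) :
    HasDerivAt p.phi (-(p.a * (p.a * x - p.sg)) / p.phi x) x := by
  have h := hp.sq_pos hx
  have hin : HasDerivAt (fun y => p.c ^ 2 - (p.a * y - p.sg) ^ 2)
      (0 - 2 * (p.a * x - p.sg) ^ 1 * p.a) x := by
    have h1 : HasDerivAt (fun y : ℝ => p.a * y - p.sg) p.a x := by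
      simpa using ((hasDerivAt_id x).const_mul p.a).sub_const p.sg
    exact (hasDerivAt_const x (p.c ^ 2)).sub (h1.pow 2)
  have hs := (Real.hasDerivAt_sqrt (ne_of_gt h)).comp x hin
  have hphi : p.phi x = Real.sqrt (p.c ^ 2 - (p.a * x - p.sg) ^ 2) := rfl
  have hφ : 0 < p.phi x := hp.phi_pos hx
  refine hs.congr_deriv (Eq.symm ?_)
  rw [← hphi]
  field_simp
  ring

lemma phi_junc (hc : 0 ≤ p.c) {x : ℝ} (hx : p.a * x = p.sg) : p.phi x = p.c := by
  rw [phi, hx, sub_self]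
  simpa using Real.sqrt_sq hc

lemma Good.hasDerivAt_psi (hp : p.Good) {x : ℝ} (hx : x ∈ Ioo p.al p.be) :
    HasDerivAt p.psi (p.dpsi x) x := by
  have hφ : 0 < p.phi x := hp.phi_pos hx
  rcases lt_trichotomy (p.a * x) p.sg with hlt | heq | hgt
  · have hev : ∀ᶠ y in 𝓝 x, p.psi y = p.phi y := by
      have : ∀ᶠ y in 𝓝 x, p.a * y < p.sg :=
        (Continuous.tendsto (by continuity) x).eventually (eventually_lt_nhds hlt)
      filter_upwards [this] with y hy
      rw [psi, if_pos hy.le]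
    have := (hp.hasDerivAt_phi hx).congr_of_eventuallyEq hev
    refine this.congr_deriv (Eq.symm ?_)
    rw [dpsi, abs_of_neg (by linarith)]
    field_simp
  · -- junction point
    have hval : p.psi x = p.c := by rw [psi, if_pos heq.le, phi_junc hp.hc.le heq]
    have hphiv : p.phi x = p.c := phi_junc hp.hc.le heq
    have hphi0 : HasDerivAt p.phi 0 x := by
      have := hp.hasDerivAt_phi hx
      rw [heq, sub_self, mul_zero, neg_zero, zero_div] at this
      exact this
    have hdval : p.dpsi x = 0 := by
      rw [dpsi, heq, sub_self, abs_zero, mul_zero, zero_div]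
    rw [hdval, hasDerivAt_iff_tendsto_slope]
    rw [hasDerivAt_iff_tendsto_slope] at hphi0
    rw [tendsto_zero_iff_abs_tendsto_zero] at hphi0 ⊢
    have habs : ∀ y : ℝ, |p.psi y - p.psi x| = |p.phi y - p.phi x| := by
      intro y
      rw [hval, hphiv, psi]
      split
      · rfl
      · rw [show 2 * p.c - p.phi y - p.c = -(p.phi y - p.c) by ring, abs_neg]
    have heqf : abs ∘ slope p.psi x = abs ∘ slope p.phi x := by
      funext y
      simp only [Function.comp_apply]
      rw [slope_def_field, slope_def_field, div_eq_mul_inv, div_eq_mul_inv, abs_mul, abs_mul,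
        habs]
    rw [heqf]
    exact hphi0
  · have hev : ∀ᶠ y in 𝓝 x, p.psi y = 2 * p.c - p.phi y := by
      have : ∀ᶠ y in 𝓝 x, p.sg < p.a * y :=
        (Continuous.tendsto (by continuity) x).eventually (eventually_gt_nhds hgt)
      filter_upwards [this] with y hy
      rw [psi, if_neg (not_le.2 hy)]
    have := ((hasDerivAt_const x (2 * p.c)).sub (hp.hasDerivAt_phi hx)).congr_of_eventuallyEq hev
    refine this.congr_deriv (Eq.symm ?_)
    rw [dpsi, abs_of_pos (by linarith)]
    field_simp
    ring

lemma Good.hasDerivAt_chi (hp : p.Good) {x : ℝ} (hx : x ∈ Ioo p.al p.be) :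
    HasDerivAt p.chi (p.dchi x) x := by
  have h1 := ((hp.hasDerivAt_psi hx).const_mul (p.c / (p.a * p.mu))).add
    ((hasDerivAt_id x).const_mul p.vb)
  have h2 := h1.const_mul (2 / p.de)
  refine h2.congr_deriv (Eq.symm ?_)
  rw [dchi]; ring

lemma Good.fsG_eq (hp : p.Good) (x : ℝ) :
    fsG p.mu p.c (p.a * x - p.sg) = p.c * (p.a * x - p.sg) / (p.mu * p.phi x) := rfl

lemma Good.abs_fsG (hp : p.Good) {x : ℝ} (hx : x ∈ Ioo p.al p.be) :
    |fsG p.mu p.c (p.a * x - p.sg)| = (p.c / (p.a * p.mu)) * p.dpsi x := by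
  have hφ : 0 < p.phi x := hp.phi_pos hx
  rw [hp.fsG_eq, abs_div, abs_mul, abs_mul, abs_of_pos hp.hc, abs_of_pos hp.hmu,
    abs_of_pos hφ, dpsi]
  have ha := hp.ha.ne'
  field_simp

lemma Good.dpsi_nonneg (hp : p.Good) {x : ℝ} (hx : x ∈ Ioo p.al p.be) : 0 ≤ p.dpsi x := by
  have hφ : 0 < p.phi x := hp.phi_pos hx
  have := hp.ha
  rw [dpsi]; positivity

lemma Good.dchi_nonneg (hp : p.Good) {x : ℝ} (hx : x ∈ Ioo p.al p.be) : 0 ≤ p.dchi x := by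
  have h1 := hp.dpsi_nonneg hx
  have h2 := hp.vb_nonneg
  have h3 := hp.hde
  have h4 := hp.ha
  have h5 := hp.hmu
  have h6 := hp.hc
  rw [dchi]
  positivity

lemma Good.key (hp : p.Good) {x : ℝ} (hx : x ∈ Ioo p.al p.be) {V : ℝ} (hV : p.de / 2 ≤ V) :
    |fsG p.mu p.c (p.a * x - p.sg) - x| ≤ p.dchi x * V := by
  have h1 : |fsG p.mu p.c (p.a * x - p.sg) - x| ≤
      (p.c / (p.a * p.mu)) * p.dpsi x + p.vb :=
    calc |fsG p.mu p.c (p.a * x - p.sg) - x| ≤ |fsG p.mu p.c (p.a * x - p.sg)| + |x| :=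
          abs_sub _ _
    _ ≤ (p.c / (p.a * p.mu)) * p.dpsi x + p.vb := by
        rw [hp.abs_fsG hx]
        have := hp.abs_le_vb (Ioo_subset_Icc_self hx)
        linarith
  have hd0 := hp.dchi_nonneg hx
  have hde := hp.hde
  calc |fsG p.mu p.c (p.a * x - p.sg) - x| ≤ (p.c / (p.a * p.mu)) * p.dpsi x + p.vb := h1
  _ = p.dchi x * (p.de / 2) := by rw [dchi]; field_simp
  _ ≤ p.dchi x * V := by
      apply mul_le_mul_of_nonneg_left hV hd0

lemma Good.chi_osc (hp : p.Good) {x y : ℝ} (hx : x ∈ Icc p.al p.be) (hy : y ∈ Icc p.al p.be) :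
    p.chi x - p.chi y ≤ p.Cchi := by
  have h1 : p.psi x ≤ 2 * p.c := p.psi_le hp.hc.le x
  have h2 : 0 ≤ p.psi y := p.psi_nonneg hp.hc.le y
  have h3 : p.vb * x - p.vb * y ≤ p.vb * (p.be - p.al) := by
    have := hp.vb_nonneg
    nlinarith [hx.1, hx.2, hy.1, hy.2]
  have h4 : 0 < p.c / (p.a * p.mu) := div_pos hp.hc (mul_pos hp.ha hp.hmu)
  have h5 : 0 ≤ 2 / p.de := by have := hp.hde; positivity
  have hmain : (p.c / (p.a * p.mu)) * p.psi x + p.vb * x -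
      ((p.c / (p.a * p.mu)) * p.psi y + p.vb * y) ≤
      (p.c / (p.a * p.mu)) * (2 * p.c) + p.vb * (p.be - p.al) := by
    linarith [mul_le_mul_of_nonneg_left h1 h4.le, mul_nonneg h4.le h2]
  rw [chi, chi, Cchi, ← mul_sub]
  exact mul_le_mul_of_nonneg_left hmain h5

lemma Good.Cchi_nonneg (hp : p.Good) : 0 ≤ p.Cchi := by
  have := hp.chi_osc (left_mem_Icc.2 hp.albe.le) (left_mem_Icc.2 hp.albe.le)
  linarith

lemma Good.hwst (hp : p.Good) : 0 < p.wst := by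
  have := hp.hW
  rw [wst]
  positivity

lemma Good.continuous_chi (hp : p.Good) : Continuous p.chi := by
  have hphi : Continuous p.phi := by
    apply Real.continuous_sqrt.comp
    continuity
  have hpsi : Continuous p.psi := by
    apply Continuous.if_le hphi (by continuity) (by continuity) continuous_const
    intro y hy
    rw [phi_junc hp.hc.le hy]
    ring
  apply Continuous.mul continuous_const
  exact (continuous_const.mul hpsi).add (continuous_const.mul continuous_id)

end P

end FS18

namespace FS18

lemma tendsto_fsG_atTop {μ c : ℝ} (hμ : 0 < μ) (hc : 0 < c) :
    Tendsto (fsG μ c) (𝓝[Ioo (-c) c] c) atTop := by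
  have hnum : Tendsto (fun y : ℝ => c * y) (𝓝[Ioo (-c) c] c) (𝓝 (c * c)) :=
    ((continuous_const.mul continuous_id).tendsto c).mono_left nhdsWithin_le_nhds
  have hden : Tendsto (fun y : ℝ => μ * Real.sqrt (c ^ 2 - y ^ 2)) (𝓝[Ioo (-c) c] c)
      (𝓝[>] 0) := by
    rw [tendsto_nhdsWithin_iff]
    constructor
    · have h : Tendsto (fun y : ℝ => μ * Real.sqrt (c ^ 2 - y ^ 2)) (𝓝 c)
          (𝓝 (μ * Real.sqrt (c ^ 2 - c ^ 2))) :=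
        tendsto_const_nhds.mul ((Real.continuous_sqrt.comp (by continuity)).tendsto c)
      simpa using h.mono_left nhdsWithin_le_nhds
    · filter_upwards [self_mem_nhdsWithin] with y hy
      rcases hy with ⟨h1, h2⟩
      have h3 : 0 < c ^ 2 - y ^ 2 := by nlinarith
      exact mul_pos hμ (Real.sqrt_pos.2 h3)
  have hinv := tendsto_inv_nhdsGT_zero.comp hden
  have hmul := hnum.pos_mul_atTop (by nlinarith) hinv
  refine hmul.congr fun y => ?_
  simp [fsG, div_eq_mul_inv, Function.comp]

lemma tendsto_fsG_atBot {μ c : ℝ} (hμ : 0 < μ) (hc : 0 < c) :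
    Tendsto (fsG μ c) (𝓝[Ioo (-c) c] (-c)) atBot := by
  have hnum : Tendsto (fun y : ℝ => c * y) (𝓝[Ioo (-c) c] (-c)) (𝓝 (c * (-c))) :=
    ((continuous_const.mul continuous_id).tendsto (-c)).mono_left nhdsWithin_le_nhds
  have hden : Tendsto (fun y : ℝ => μ * Real.sqrt (c ^ 2 - y ^ 2)) (𝓝[Ioo (-c) c] (-c))
      (𝓝[>] 0) := by
    rw [tendsto_nhdsWithin_iff]
    constructor
    · have h : Tendsto (fun y : ℝ => μ * Real.sqrt (c ^ 2 - y ^ 2)) (𝓝 (-c))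
          (𝓝 (μ * Real.sqrt (c ^ 2 - (-c) ^ 2))) :=
        tendsto_const_nhds.mul ((Real.continuous_sqrt.comp (by continuity)).tendsto (-c))
      simpa using h.mono_left nhdsWithin_le_nhds
    · filter_upwards [self_mem_nhdsWithin] with y hy
      rcases hy with ⟨h1, h2⟩
      have h3 : 0 < c ^ 2 - y ^ 2 := by nlinarith
      exact mul_pos hμ (Real.sqrt_pos.2 h3)
  have hinv := tendsto_inv_nhdsGT_zero.comp hden
  have hmul := hnum.neg_mul_atTop (by nlinarith) hinv
  refine hmul.congr fun y => ?_
  simp [fsG, div_eq_mul_inv, Function.comp]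

namespace P

noncomputable def F (p : P) : ℝ × ℝ → ℝ × ℝ := fun r =>
  (r.1 * (fsG p.mu p.c (p.a * r.2 - p.sg) - r.2), p.lam / p.ga - r.2 ^ 2 - r.1 / p.ga)

variable {p : P}

lemma Good.continuousAt_fsG (hp : p.Good) {x : ℝ} (hx : x ∈ Ioo p.al p.be) :
    ContinuousAt (fun y : ℝ => fsG p.mu p.c (p.a * y - p.sg)) x := by
  have h := hp.sq_pos hx
  have hφ := hp.phi_pos hx
  show ContinuousAt
    (fun y : ℝ => p.c * (p.a * y - p.sg) / (p.mu * Real.sqrt (p.c ^ 2 - (p.a * y - p.sg) ^ 2))) x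
  apply ContinuousAt.div
  · exact Continuous.continuousAt (by continuity)
  · exact Continuous.continuousAt (by continuity)
  · have : Real.sqrt (p.c ^ 2 - (p.a * x - p.sg) ^ 2) = p.phi x := rfl
    rw [this]
    exact (mul_pos hp.hmu hφ).ne'

lemma Good.contDiffAt_F (hp : p.Good) {q : ℝ × ℝ} (hq2 : q.2 ∈ Ioo p.al p.be) :
    ContDiffAt ℝ 1 p.F q := by
  have h := hp.sq_pos hq2
  have hφ := hp.phi_pos hq2
  apply ContDiffAt.prodMk
  · apply ContDiffAt.mul (contDiff_fst.contDiffAt)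
    apply ContDiffAt.sub _ contDiff_snd.contDiffAt
    show ContDiffAt ℝ 1 (fun r : ℝ × ℝ =>
      p.c * (p.a * r.2 - p.sg) / (p.mu * Real.sqrt (p.c ^ 2 - (p.a * r.2 - p.sg) ^ 2))) q
    have hinner : ContDiff ℝ 1 (fun r : ℝ × ℝ => p.c ^ 2 - (p.a * r.2 - p.sg) ^ 2) := by
      apply ContDiff.sub contDiff_const
      exact ((contDiff_const.mul contDiff_snd).sub contDiff_const).pow 2
    apply ContDiffAt.div
    · exact (contDiff_const.mul ((contDiff_const.mul contDiff_snd).sub contDiff_const)).contDiffAt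
    · exact contDiffAt_const.mul ((Real.contDiffAt_sqrt h.ne').comp q hinner.contDiffAt)
    · have : Real.sqrt (p.c ^ 2 - (p.a * q.2 - p.sg) ^ 2) = p.phi q.2 := rfl
      rw [this]
      exact (mul_pos hp.hmu hφ).ne'
  · apply ContDiffAt.sub
    · exact contDiffAt_const.sub (contDiff_snd.contDiffAt.pow 2)
    · exact contDiff_fst.contDiffAt.div contDiffAt_const hp.hga.ne'

end P

end FS18

namespace FS18

open P

def SolOn (p : P) (w v : ℝ → ℝ) (S : Set ℝ) : Prop :=
  ∀ s ∈ S, 0 < w s ∧ v s ∈ Ioo p.al p.be ∧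
    HasDerivAt w (w s * (fsG p.mu p.c (p.a * v s - p.sg) - v s)) s ∧
    HasDerivAt v (p.lam / p.ga - v s ^ 2 - w s / p.ga) s

variable {p : P} {w v : ℝ → ℝ} {S : Set ℝ}

lemma SolOn.mono (h : SolOn p w v S) {T : Set ℝ} (hT : T ⊆ S) : SolOn p w v T :=
  fun s hs => h s (hT hs)

lemma SolOn.contW (h : SolOn p w v S) : ContinuousOn w S :=
  fun t ht => ((h t ht).2.2.1.continuousAt).continuousWithinAt

lemma SolOn.contV (h : SolOn p w v S) : ContinuousOn v S :=
  fun t ht => ((h t ht).2.2.2.continuousAt).continuousWithinAt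

/-- The energy function `sgn · log w − χ ∘ v` is antitone while `w ≤ W`. -/
lemma P.Good.antitoneE (hp : p.Good) {s0 s1 : ℝ}
    (hsol : SolOn p w v (Icc s0 s1)) (hW : ∀ t ∈ Icc s0 s1, w t ≤ p.W)
    {sgn : ℝ} (hsgn : sgn = 1 ∨ sgn = -1) :
    AntitoneOn (fun t => sgn * Real.log (w t) - p.chi (v t)) (Icc s0 s1) := by
  have hcont : ContinuousOn (fun t => sgn * Real.log (w t) - p.chi (v t)) (Icc s0 s1) := by
    apply ContinuousOn.sub
    · exact (hsol.contW.log (fun t ht => (hsol t ht).1.ne')).const_smul sgn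
    · exact hp.continuous_chi.comp_continuousOn hsol.contV
  have hderiv : ∀ t ∈ interior (Icc s0 s1),
      HasDerivAt (fun t => sgn * Real.log (w t) - p.chi (v t))
        (sgn * ((w t * (fsG p.mu p.c (p.a * v t - p.sg) - v t)) / w t) -
          p.dchi (v t) * (p.lam / p.ga - v t ^ 2 - w t / p.ga)) t := by
    intro t ht
    rw [interior_Icc] at ht
    have hmem : t ∈ Icc s0 s1 := Ioo_subset_Icc_self ht
    obtain ⟨hw1, hv1, hdw, hdv⟩ := hsol t hmem
    exact ((hdw.log hw1.ne').const_mul sgn).sub ((hp.hasDerivAt_chi hv1).comp t hdv)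
  apply antitoneOn_of_deriv_nonpos (convex_Icc s0 s1) hcont
  · intro t ht
    exact ((hderiv t ht).differentiableAt).differentiableWithinAt
  · intro t ht
    rw [(hderiv t ht).deriv]
    rw [interior_Icc] at ht
    have hmem : t ∈ Icc s0 s1 := Ioo_subset_Icc_self ht
    obtain ⟨hw1, hv1, hdw, hdv⟩ := hsol t hmem
    have hWt := hW t hmem
    have hV : p.de / 2 ≤ p.lam / p.ga - v t ^ 2 - w t / p.ga := by
      have h1 := hp.de_le (Ioo_subset_Icc_self hv1)
      have h2 : w t / p.ga ≤ p.de / 2 := by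
        rw [div_le_iff₀ hp.hga]
        have : p.W = p.ga * p.de / 2 := rfl
        rw [this] at hWt
        linarith
      linarith
    have hkey := hp.key hv1 hV
    have hcancel : w t * (fsG p.mu p.c (p.a * v t - p.sg) - v t) / w t =
        fsG p.mu p.c (p.a * v t - p.sg) - v t := by
      field_simp
    rw [hcancel]
    have hk := abs_le.1 hkey
    rcases hsgn with h | h <;> rw [h] <;> nlinarith [hk.1, hk.2]

/-- Two sided log-bound on `w` along the solution, while `w ≤ W`. -/
lemma P.Good.logBound (hp : p.Good) {s0 s1 : ℝ} (hle : s0 ≤ s1)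
    (hsol : SolOn p w v (Icc s0 s1)) (hW : ∀ t ∈ Icc s0 s1, w t ≤ p.W) :
    |Real.log (w s1) - Real.log (w s0)| ≤ p.Cchi := by
  have h0 : s0 ∈ Icc s0 s1 := left_mem_Icc.2 hle
  have h1 : s1 ∈ Icc s0 s1 := right_mem_Icc.2 hle
  have hvx := (hsol s0 h0).2.1
  have hvy := (hsol s1 h1).2.1
  have hosc1 := hp.chi_osc (Ioo_subset_Icc_self hvy) (Ioo_subset_Icc_self hvx)
  have hosc2 := hp.chi_osc (Ioo_subset_Icc_self hvx) (Ioo_subset_Icc_self hvy)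
  have hE1 := hp.antitoneE hsol hW (Or.inl rfl) h0 h1 hle
  have hE2 := hp.antitoneE hsol hW (Or.inr rfl) h0 h1 hle
  simp only [one_mul, neg_one_mul] at hE1 hE2
  rw [abs_le]
  constructor <;> linarith

/-- Bootstrap: if `w` starts below `wst`, it stays below `W/2` (to the right). -/
lemma P.Good.wBound_right (hp : p.Good) {s0 s1 : ℝ} (hle : s0 ≤ s1)
    (hsol : SolOn p w v (Icc s0 s1)) (hpos0 : w s0 < p.wst) :
    ∀ t ∈ Icc s0 s1, w t ≤ p.W / 2 := by
  by_contra hcon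
  push_neg at hcon
  obtain ⟨t, htmem, htgt⟩ := hcon
  set B := {u : ℝ | u ∈ Icc s0 s1 ∧ p.W / 2 ≤ w u} with hB
  have hBne : B.Nonempty := ⟨t, htmem, htgt.le⟩
  have hBsub : B ⊆ Icc s0 s1 := fun u hu => hu.1
  have hBclosed : IsClosed B := by
    have := hsol.contW.preimage_isClosed_of_isClosed isClosed_Icc (isClosed_Ici (a := p.W / 2))
    exact this
  have hBbdd : BddBelow B := (bddBelow_Icc : BddBelow (Icc s0 s1)).mono hBsub
  set t1 := sInf B with ht1
  have ht1B : t1 ∈ B := hBclosed.csInf_mem hBne hBbdd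
  have hws0 : w s0 < p.W / 2 := by
    have hexp : Real.exp (-p.Cchi) ≤ 1 := Real.exp_le_one_iff.2 (by linarith [hp.Cchi_nonneg])
    have hW2 : 0 < p.W / 2 := by linarith [hp.hW]
    calc w s0 < p.wst := hpos0
    _ = p.W / 2 * Real.exp (-p.Cchi) := rfl
    _ ≤ p.W / 2 * 1 := by nlinarith
    _ = p.W / 2 := mul_one _
  have hs0t1 : s0 < t1 := by
    rcases lt_or_eq_of_le ht1B.1.1 with h | h
    · exact h
    · exact absurd ht1B.2 (by rw [← h]; linarith)
  have hlt : ∀ u ∈ Ico s0 t1, w u < p.W / 2 := by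
    intro u hu
    by_contra hge
    push_neg at hge
    have huB : u ∈ B := ⟨⟨hu.1, le_trans hu.2.le ht1B.1.2⟩, hge⟩
    exact absurd (csInf_le hBbdd huB) (not_le.2 hu.2)
  have hwt1 : w t1 ≤ p.W / 2 := by
    have hcl : t1 ∈ closure (Ico s0 t1) := by
      rw [closure_Ico hs0t1.ne]
      exact ⟨hs0t1.le, le_refl t1⟩
    haveI := mem_closure_iff_nhdsWithin_neBot.1 hcl
    have hsubJ : Ico s0 t1 ⊆ Icc s0 s1 := fun u hu => ⟨hu.1, le_trans hu.2.le ht1B.1.2⟩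
    have htend : Tendsto w (𝓝[Ico s0 t1] t1) (𝓝 (w t1)) := (hsol.contW t1 ht1B.1).mono hsubJ
    exact le_of_tendsto htend (eventually_nhdsWithin_of_forall (fun u hu => (hlt u hu).le))
  have hWle : ∀ u ∈ Icc s0 t1, w u ≤ p.W := by
    intro u hu
    rcases lt_or_eq_of_le hu.2 with h | h
    · linarith [hlt u ⟨hu.1, h⟩, hp.hW]
    · rw [h]; linarith [hp.hW]
  have hsub2 : Icc s0 t1 ⊆ Icc s0 s1 := Icc_subset_Icc le_rfl ht1B.1.2
  have hE := hp.antitoneE (hsol.mono hsub2) hWle (Or.inl rfl)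
    (left_mem_Icc.2 hs0t1.le) (right_mem_Icc.2 hs0t1.le) hs0t1.le
  simp only [one_mul] at hE
  have hvx := ((hsol.mono hsub2) s0 (left_mem_Icc.2 hs0t1.le)).2.1
  have hvy := ((hsol.mono hsub2) t1 (right_mem_Icc.2 hs0t1.le)).2.1
  have hosc := hp.chi_osc (Ioo_subset_Icc_self hvy) (Ioo_subset_Icc_self hvx)
  have hlog : Real.log (w t1) ≤ Real.log (w s0) + p.Cchi := by linarith
  have hw0pos : 0 < w s0 := (hsol s0 (left_mem_Icc.2 hle)).1
  have hwt1pos : 0 < w t1 := (hsol t1 (hsub2 (right_mem_Icc.2 hs0t1.le))).1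
  have : w t1 ≤ w s0 * Real.exp p.Cchi := by
    calc w t1 = Real.exp (Real.log (w t1)) := (Real.exp_log hwt1pos).symm
    _ ≤ Real.exp (Real.log (w s0) + p.Cchi) := Real.exp_le_exp.2 hlog
    _ = w s0 * Real.exp p.Cchi := by rw [Real.exp_add, Real.exp_log hw0pos]
  have hfin : w t1 < p.W / 2 := by
    have hexp : 0 < Real.exp p.Cchi := Real.exp_pos _
    have h2 : w s0 * Real.exp p.Cchi < p.wst * Real.exp p.Cchi :=
      mul_lt_mul_of_pos_right hpos0 hexp
    have h3 : p.wst * Real.exp p.Cchi = p.W / 2 := by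
      rw [wst, Real.exp_neg]
      field_simp
    linarith
  linarith [ht1B.2]

end FS18

namespace FS18

variable {p : P} {w v : ℝ → ℝ}

/-- Bootstrap: if `w` ends below `wst`, it was below `W/2` before (to the left). -/
lemma P.Good.wBound_left (hp : p.Good) {s0 s1 : ℝ} (hle : s1 ≤ s0)
    (hsol : SolOn p w v (Icc s1 s0)) (hpos0 : w s0 < p.wst) :
    ∀ t ∈ Icc s1 s0, w t ≤ p.W / 2 := by
  by_contra hcon
  push_neg at hcon
  obtain ⟨t, htmem, htgt⟩ := hcon
  set B := {u : ℝ | u ∈ Icc s1 s0 ∧ p.W / 2 ≤ w u} with hB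
  have hBne : B.Nonempty := ⟨t, htmem, htgt.le⟩
  have hBsub : B ⊆ Icc s1 s0 := fun u hu => hu.1
  have hBclosed : IsClosed B :=
    hsol.contW.preimage_isClosed_of_isClosed isClosed_Icc (isClosed_Ici (a := p.W / 2))
  have hBbdd : BddAbove B := (bddAbove_Icc (a := s1) (b := s0)).mono hBsub
  set t1 := sSup B with ht1
  have ht1B : t1 ∈ B := hBclosed.csSup_mem hBne hBbdd
  have hws0 : w s0 < p.W / 2 := by
    have hexp : Real.exp (-p.Cchi) ≤ 1 := Real.exp_le_one_iff.2 (by linarith [hp.Cchi_nonneg])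
    have hW2 : 0 < p.W / 2 := by linarith [hp.hW]
    calc w s0 < p.wst := hpos0
    _ = p.W / 2 * Real.exp (-p.Cchi) := rfl
    _ ≤ p.W / 2 * 1 := by nlinarith
    _ = p.W / 2 := mul_one _
  have hs0t1 : t1 < s0 := by
    rcases lt_or_eq_of_le ht1B.1.2 with h | h
    · exact h
    · exact absurd ht1B.2 (by rw [h]; linarith)
  have hlt : ∀ u ∈ Ioc t1 s0, w u < p.W / 2 := by
    intro u hu
    by_contra hge
    push_neg at hge
    have huB : u ∈ B := ⟨⟨le_trans ht1B.1.1 hu.1.le, hu.2⟩, hge⟩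
    exact absurd (le_csSup hBbdd huB) (not_le.2 hu.1)
  have hwt1 : w t1 ≤ p.W / 2 := by
    have hcl : t1 ∈ closure (Ioc t1 s0) := by
      rw [closure_Ioc hs0t1.ne]
      exact ⟨le_refl t1, hs0t1.le⟩
    haveI := mem_closure_iff_nhdsWithin_neBot.1 hcl
    have hsubJ : Ioc t1 s0 ⊆ Icc s1 s0 := fun u hu => ⟨le_trans ht1B.1.1 hu.1.le, hu.2⟩
    have htend : Tendsto w (𝓝[Ioc t1 s0] t1) (𝓝 (w t1)) := (hsol.contW t1 ht1B.1).mono hsubJ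
    exact le_of_tendsto htend (eventually_nhdsWithin_of_forall (fun u hu => (hlt u hu).le))
  have hWle : ∀ u ∈ Icc t1 s0, w u ≤ p.W := by
    intro u hu
    rcases lt_or_eq_of_le hu.1 with h | h
    · linarith [hlt u ⟨h, hu.2⟩, hp.hW]
    · rw [← h]; linarith [hp.hW]
  have hsub2 : Icc t1 s0 ⊆ Icc s1 s0 := Icc_subset_Icc ht1B.1.1 le_rfl
  have hE := hp.antitoneE (hsol.mono hsub2) hWle (Or.inr rfl)
    (left_mem_Icc.2 hs0t1.le) (right_mem_Icc.2 hs0t1.le) hs0t1.le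
  simp only [neg_one_mul] at hE
  have hvx := (hsol s0 (right_mem_Icc.2 hle)).2.1
  have hvy := (hsol t1 ht1B.1).2.1
  have hosc := hp.chi_osc (Ioo_subset_Icc_self hvx) (Ioo_subset_Icc_self hvy)
  have hlog : Real.log (w t1) ≤ Real.log (w s0) + p.Cchi := by linarith
  have hw0pos : 0 < w s0 := (hsol s0 (right_mem_Icc.2 hle)).1
  have hwt1pos : 0 < w t1 := (hsol t1 ht1B.1).1
  have hub : w t1 ≤ w s0 * Real.exp p.Cchi := by
    calc w t1 = Real.exp (Real.log (w t1)) := (Real.exp_log hwt1pos).symm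
    _ ≤ Real.exp (Real.log (w s0) + p.Cchi) := Real.exp_le_exp.2 hlog
    _ = w s0 * Real.exp p.Cchi := by rw [Real.exp_add, Real.exp_log hw0pos]
  have hfin : w t1 < p.W / 2 := by
    have hexp : 0 < Real.exp p.Cchi := Real.exp_pos _
    have h2 : w s0 * Real.exp p.Cchi < p.wst * Real.exp p.Cchi :=
      mul_lt_mul_of_pos_right hpos0 hexp
    have h3 : p.wst * Real.exp p.Cchi = p.W / 2 := by
      rw [wst, Real.exp_neg]
      field_simp
    linarith
  linarith [ht1B.2]

end FS18

namespace FS18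

variable {p : P} {w v : ℝ → ℝ}

lemma P.Good.vderiv_lb (hp : p.Good) {S : Set ℝ} (hsol : SolOn p w v S)
    (hWhalf : ∀ s ∈ S, w s ≤ p.W / 2) :
    ∀ s ∈ S, p.de / 2 ≤ p.lam / p.ga - v s ^ 2 - w s / p.ga := by
  intro s hs
  have h1 := hp.de_le (Ioo_subset_Icc_self (hsol s hs).2.1)
  have h2 : w s / p.ga ≤ p.de / 4 := by
    rw [div_le_iff₀ hp.hga]
    have hW : p.W = p.ga * p.de / 2 := rfl
    have := hWhalf s hs
    rw [hW] at this
    linarith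
  linarith [hp.hde]

lemma P.Good.monoV (hp : p.Good) {smr spr : ℝ} (hsol : SolOn p w v (Ioo smr spr))
    (hWhalf : ∀ s ∈ Ioo smr spr, w s ≤ p.W / 2) : MonotoneOn v (Ioo smr spr) := by
  have hV := hp.vderiv_lb hsol hWhalf
  apply monotoneOn_of_deriv_nonneg (convex_Ioo smr spr) hsol.contV
  · intro t ht
    rw [interior_Ioo] at ht
    exact ((hsol t ht).2.2.2.differentiableAt).differentiableWithinAt
  · intro t ht
    rw [interior_Ioo] at ht
    rw [(hsol t ht).2.2.2.deriv]
    linarith [hV t ht, hp.hde]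

lemma P.Good.limits (hp : p.Good) {smr spr s0 : ℝ} (hs0 : s0 ∈ Ioo smr spr)
    (hsol : SolOn p w v (Ioo smr spr))
    (hWhalf : ∀ s ∈ Ioo smr spr, w s ≤ p.W / 2)
    (hwst : w s0 < p.wst) :
    ∃ Lv1 Lv2 L1 L2 : ℝ,
      p.al ≤ Lv1 ∧ Lv1 ≤ v s0 ∧ v s0 ≤ Lv2 ∧ Lv2 ≤ p.be ∧
      Tendsto v (𝓝[>] smr) (𝓝 Lv1) ∧ Tendsto v (𝓝[<] spr) (𝓝 Lv2) ∧
      0 < L1 ∧ L1 ≤ p.W / 2 ∧ Tendsto w (𝓝[>] smr) (𝓝 L1) ∧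
      0 < L2 ∧ L2 ≤ p.W / 2 ∧ Tendsto w (𝓝[<] spr) (𝓝 L2) := by
  set J := Ioo smr spr with hJ
  have hne : J.Nonempty := ⟨s0, hs0⟩
  have hmono := hp.monoV hsol hWhalf
  have hsub : ∀ {x y : ℝ}, x ∈ J → y ∈ J → Icc x y ⊆ J := by
    intro x y hx hy u hu
    exact ⟨lt_of_lt_of_le hx.1 hu.1, lt_of_le_of_lt hu.2 hy.2⟩
  -- v-limits
  have hvub : ∀ z ∈ v '' J, z ≤ p.be := by
    rintro z ⟨u, hu, rfl⟩; exact ((hsol u hu).2.1.2).le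
  have hvlb : ∀ z ∈ v '' J, p.al ≤ z := by
    rintro z ⟨u, hu, rfl⟩; exact ((hsol u hu).2.1.1).le
  have hbddA : BddAbove (v '' J) := ⟨p.be, hvub⟩
  have hbddB : BddBelow (v '' J) := ⟨p.al, hvlb⟩
  have hv0mem : v s0 ∈ v '' J := mem_image_of_mem v hs0
  -- w-limits
  have hE : AntitoneOn (fun t => Real.log (w t) - p.chi (v t)) J := by
    intro x hx y hy hxy
    have hIcc := hsub hx hy
    have := hp.antitoneE (hsol.mono hIcc)
      (fun t ht => le_trans (hWhalf t (hIcc ht)) (by linarith [hp.hW]))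
      (Or.inl rfl) (left_mem_Icc.2 hxy) (right_mem_Icc.2 hxy) hxy
    simpa using this
  -- log w bounds on J
  have hlogb : ∀ s ∈ J, |Real.log (w s) - Real.log (w s0)| ≤ p.Cchi := by
    intro s hsJ
    rcases le_total s0 s with h | h
    · exact hp.logBound h (hsol.mono (hsub hs0 hsJ))
        (fun t ht => le_trans (hWhalf t (hsub hs0 hsJ ht)) (by linarith [hp.hW]))
    · rw [abs_sub_comm]
      exact hp.logBound h (hsol.mono (hsub hsJ hs0))
        (fun t ht => le_trans (hWhalf t (hsub hsJ hs0 ht)) (by linarith [hp.hW]))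
  have hchib : ∀ s ∈ J, p.chi p.al - p.Cchi ≤ p.chi (v s) ∧
      p.chi (v s) ≤ p.chi p.al + p.Cchi := by
    intro s hsJ
    have hmem := Ioo_subset_Icc_self (hsol s hsJ).2.1
    have hal : p.al ∈ Icc p.al p.be := left_mem_Icc.2 hp.albe.le
    constructor
    · linarith [hp.chi_osc hal hmem]
    · linarith [hp.chi_osc hmem hal]
  have hEb1 : BddBelow ((fun t => Real.log (w t) - p.chi (v t)) '' J) := by
    refine ⟨Real.log (w s0) - p.Cchi - (p.chi p.al + p.Cchi), ?_⟩
    rintro z ⟨u, hu, rfl⟩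
    have h1 := (abs_le.1 (hlogb u hu)).1
    have h2 := (hchib u hu).2
    simp only
    linarith
  have hEb2 : BddAbove ((fun t => Real.log (w t) - p.chi (v t)) '' J) := by
    refine ⟨Real.log (w s0) + p.Cchi - (p.chi p.al - p.Cchi), ?_⟩
    rintro z ⟨u, hu, rfl⟩
    have h1 := (abs_le.1 (hlogb u hu)).2
    have h2 := (hchib u hu).1
    simp only
    linarith
  have hJev1 : J ∈ 𝓝[>] smr := by
    rw [hJ]
    exact Ioo_mem_nhdsGT (lt_trans hs0.1 hs0.2)
  have hJev2 : J ∈ 𝓝[<] spr := by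
    rw [hJ]
    exact Ioo_mem_nhdsLT (lt_trans hs0.1 hs0.2)
  have hvt1 := hmono.tendsto_nhdsWithin_Ioo_right hne hbddB
  have hvt2 := hmono.tendsto_nhdsWithin_Ioo_left hne hbddA
  have hchit1 : Tendsto (fun s => p.chi (v s)) (𝓝[>] smr) (𝓝 (p.chi (sInf (v '' J)))) :=
    (hp.continuous_chi.continuousAt.tendsto).comp hvt1
  have hchit2 : Tendsto (fun s => p.chi (v s)) (𝓝[<] spr) (𝓝 (p.chi (sSup (v '' J)))) :=
    (hp.continuous_chi.continuousAt.tendsto).comp hvt2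
  have hEt1 := hE.tendsto_nhdsWithin_Ioo_right hne hEb2
  have hEt2 := hE.tendsto_nhdsWithin_Ioo_left hne hEb1
  have hlogt1 : Tendsto (fun s => Real.log (w s)) (𝓝[>] smr)
      (𝓝 (sSup ((fun t => Real.log (w t) - p.chi (v t)) '' J) + p.chi (sInf (v '' J)))) := by
    refine (hEt1.add hchit1).congr' ?_
    filter_upwards [hJev1] with u hu
    ring
  have hlogt2 : Tendsto (fun s => Real.log (w s)) (𝓝[<] spr)
      (𝓝 (sInf ((fun t => Real.log (w t) - p.chi (v t)) '' J) + p.chi (sSup (v '' J)))) := by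
    refine (hEt2.add hchit2).congr' ?_
    filter_upwards [hJev2] with u hu
    ring
  have hwt1 : Tendsto w (𝓝[>] smr)
      (𝓝 (Real.exp (sSup ((fun t => Real.log (w t) - p.chi (v t)) '' J) +
        p.chi (sInf (v '' J))))) := by
    refine (Real.continuous_exp.continuousAt.tendsto.comp hlogt1).congr' ?_
    filter_upwards [hJev1] with u hu
    simp [Real.exp_log (hsol u hu).1]
  have hwt2 : Tendsto w (𝓝[<] spr)
      (𝓝 (Real.exp (sInf ((fun t => Real.log (w t) - p.chi (v t)) '' J) +
        p.chi (sSup (v '' J))))) := by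
    refine (Real.continuous_exp.continuousAt.tendsto.comp hlogt2).congr' ?_
    filter_upwards [hJev2] with u hu
    simp [Real.exp_log (hsol u hu).1]
  refine ⟨sInf (v '' J), sSup (v '' J),
    Real.exp (sSup ((fun t => Real.log (w t) - p.chi (v t)) '' J) + p.chi (sInf (v '' J))),
    Real.exp (sInf ((fun t => Real.log (w t) - p.chi (v t)) '' J) + p.chi (sSup (v '' J))),
    le_csInf ⟨v s0, hv0mem⟩ hvlb, csInf_le hbddB hv0mem, le_csSup hbddA hv0mem,
    csSup_le ⟨v s0, hv0mem⟩ hvub, hvt1, hvt2,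
    Real.exp_pos _, ?_, hwt1, Real.exp_pos _, ?_, hwt2⟩
  · refine le_of_tendsto hwt1 ?_
    filter_upwards [hJev1] with u hu
    exact hWhalf u hu
  · refine le_of_tendsto hwt2 ?_
    filter_upwards [hJev2] with u hu
    exact hWhalf u hu

end FS18

namespace FS18

variable {p : P} {w v : ℝ → ℝ}

lemma P.Good.glue_right (hp : p.Good) {smr spr : ℝ} (hlt : smr < spr)
    (hsol : SolOn p w v (Ioo smr spr))
    {Lv2 L2 : ℝ} (hvt : Tendsto v (𝓝[<] spr) (𝓝 Lv2)) (hwt : Tendsto w (𝓝[<] spr) (𝓝 L2))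
    (hL2 : 0 < L2) (hLv2 : Lv2 ∈ Ioo p.al p.be) :
    ∃ ε > (0:ℝ), ∃ w₁ v₁ : ℝ → ℝ,
      (∀ s ∈ Ioo smr spr, w₁ s = w s ∧ v₁ s = v s) ∧
      SolOn p w₁ v₁ (Ioo smr (spr + ε)) := by
  have hcd : ContDiffAt ℝ 1 p.F ((L2, Lv2) : ℝ × ℝ) := hp.contDiffAt_F hLv2
  obtain ⟨f, hf0, ε0, hε0, hode⟩ := ContDiffAt.exists_forall_mem_closedBall_exists_eq_forall_mem_Ioo_hasDerivAt₀ hcd spr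
  have hsprIoo : spr ∈ Ioo (spr - ε0) (spr + ε0) := by constructor <;> linarith
  have hcontf : ContinuousAt f spr := (hode spr hsprIoo).continuousAt
  have hopen : IsOpen {r : ℝ × ℝ | 0 < r.1 ∧ r.2 ∈ Ioo p.al p.be} :=
    (isOpen_lt continuous_const continuous_fst).inter (isOpen_Ioo.preimage continuous_snd)
  have hmemK : f spr ∈ {r : ℝ × ℝ | 0 < r.1 ∧ r.2 ∈ Ioo p.al p.be} := by
    rw [hf0]; exact ⟨hL2, hLv2⟩
  have hKev : ∀ᶠ t in 𝓝 spr, 0 < (f t).1 ∧ (f t).2 ∈ Ioo p.al p.be :=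
    hcontf.eventually_mem (hopen.mem_nhds hmemK)
  obtain ⟨δ, hδpos, hδ⟩ := Metric.eventually_nhds_iff.1 hKev
  set ε := min (δ / 2) (ε0 / 2) with hε
  have hεpos : 0 < ε := lt_min (by linarith) (by linarith)
  set w₁ : ℝ → ℝ := fun s => if s < spr then w s else (f s).1 with hw₁
  set v₁ : ℝ → ℝ := fun s => if s < spr then v s else (f s).2 with hv₁
  have hw₁left : ∀ u : ℝ, u < spr → w₁ u = w u := fun u hu => if_pos hu
  have hv₁left : ∀ u : ℝ, u < spr → v₁ u = v u := fun u hu => if_pos hu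
  have hw₁right : ∀ u : ℝ, spr ≤ u → w₁ u = (f u).1 := fun u hu => if_neg (not_lt.2 hu)
  have hv₁right : ∀ u : ℝ, spr ≤ u → v₁ u = (f u).2 := fun u hu => if_neg (not_lt.2 hu)
  -- derivatives of the glued functions strictly to the left
  have hw₁deriv : ∀ u ∈ Ioo smr spr,
      HasDerivAt w₁ (w u * (fsG p.mu p.c (p.a * v u - p.sg) - v u)) u := by
    intro u hu
    refine ((hsol u hu).2.2.1).congr_of_eventuallyEq ?_
    filter_upwards [Iio_mem_nhds hu.2] with t ht
    exact hw₁left t ht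
  have hv₁deriv : ∀ u ∈ Ioo smr spr,
      HasDerivAt v₁ (p.lam / p.ga - v u ^ 2 - w u / p.ga) u := by
    intro u hu
    refine ((hsol u hu).2.2.2).congr_of_eventuallyEq ?_
    filter_upwards [Iio_mem_nhds hu.2] with t ht
    exact hv₁left t ht
  have hIooEv : Ioo smr spr ∈ 𝓝[<] spr := Ioo_mem_nhdsLT hlt
  refine ⟨ε, hεpos, w₁, v₁, fun s hs => ⟨hw₁left s hs.2, hv₁left s hs.2⟩, ?_⟩
  intro s hs
  rcases lt_trichotomy s spr with hcase | hcase | hcase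
  · -- left part: the old solution
    have hsIn : s ∈ Ioo smr spr := ⟨hs.1, hcase⟩
    obtain ⟨h1, h2, h3, h4⟩ := hsol s hsIn
    rw [hw₁left s hcase, hv₁left s hcase]
    exact ⟨h1, h2, hw₁deriv s hsIn, hv₁deriv s hsIn⟩
  · -- junction point
    subst hcase
    have hwv : w₁ s = L2 ∧ v₁ s = Lv2 := by
      rw [hw₁right s le_rfl, hv₁right s le_rfl, hf0]
      exact ⟨rfl, rfl⟩
    have hfd : HasDerivAt f (p.F (f s)) s := hode s hsprIoo
    have hfst : HasDerivAt (fun t => (f t).1) ((p.F (f s)).1) s := by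
      have := (ContinuousLinearMap.fst ℝ ℝ ℝ).hasFDerivAt.comp_hasDerivAt s hfd
      exact this
    have hsnd : HasDerivAt (fun t => (f t).2) ((p.F (f s)).2) s := by
      have := (ContinuousLinearMap.snd ℝ ℝ ℝ).hasFDerivAt.comp_hasDerivAt s hfd
      exact this
    have hFval : p.F (f s) = (L2 * (fsG p.mu p.c (p.a * Lv2 - p.sg) - Lv2),
        p.lam / p.ga - Lv2 ^ 2 - L2 / p.ga) := by
      rw [hf0]; rfl
    -- right-sided derivatives
    have hrw : HasDerivWithinAt w₁ ((p.F (f s)).1) (Ici s) s :=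
      (hfst.hasDerivWithinAt).congr (fun u hu => hw₁right u hu) (hw₁right s le_rfl)
    have hrv : HasDerivWithinAt v₁ ((p.F (f s)).2) (Ici s) s :=
      (hsnd.hasDerivWithinAt).congr (fun u hu => hv₁right u hu) (hv₁right s le_rfl)
    -- left-sided derivatives
    have hdiffw : DifferentiableOn ℝ w₁ (Ioo smr s) := fun u hu =>
      ((hw₁deriv u hu).differentiableAt).differentiableWithinAt
    have hdiffv : DifferentiableOn ℝ v₁ (Ioo smr s) := fun u hu =>
      ((hv₁deriv u hu).differentiableAt).differentiableWithinAt
    have hcwl : ContinuousWithinAt w₁ (Ioo smr s) s := by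
      show Tendsto w₁ (𝓝[Ioo smr s] s) (𝓝 (w₁ s))
      rw [hwv.1]
      refine ((hwt.mono_left (nhdsWithin_mono _ Ioo_subset_Iio_self)).congr' ?_)
      filter_upwards [self_mem_nhdsWithin] with u hu
      exact (hw₁left u hu.2).symm
    have hcvl : ContinuousWithinAt v₁ (Ioo smr s) s := by
      show Tendsto v₁ (𝓝[Ioo smr s] s) (𝓝 (v₁ s))
      rw [hwv.2]
      refine ((hvt.mono_left (nhdsWithin_mono _ Ioo_subset_Iio_self)).congr' ?_)
      filter_upwards [self_mem_nhdsWithin] with u hu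
      exact (hv₁left u hu.2).symm
    have hderivwlim : Tendsto (deriv w₁) (𝓝[<] s) (𝓝 ((p.F (f s)).1)) := by
      have hfsG : Tendsto (fun u => fsG p.mu p.c (p.a * v u - p.sg)) (𝓝[<] s)
          (𝓝 (fsG p.mu p.c (p.a * Lv2 - p.sg))) :=
        ((hp.continuousAt_fsG hLv2).tendsto).comp hvt
      have hmain : Tendsto (fun u => w u * (fsG p.mu p.c (p.a * v u - p.sg) - v u)) (𝓝[<] s)
          (𝓝 (L2 * (fsG p.mu p.c (p.a * Lv2 - p.sg) - Lv2))) := hwt.mul (hfsG.sub hvt)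
      rw [hFval]
      refine hmain.congr' ?_
      filter_upwards [hIooEv] with u hu
      exact ((hw₁deriv u hu).deriv).symm
    have hderivvlim : Tendsto (deriv v₁) (𝓝[<] s) (𝓝 ((p.F (f s)).2)) := by
      have hmain : Tendsto (fun u => p.lam / p.ga - v u ^ 2 - w u / p.ga) (𝓝[<] s)
          (𝓝 (p.lam / p.ga - Lv2 ^ 2 - L2 / p.ga)) :=
        (tendsto_const_nhds.sub (hvt.pow 2)).sub (hwt.div_const p.ga)
      rw [hFval]
      refine hmain.congr' ?_
      filter_upwards [hIooEv] with u hu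
      exact ((hv₁deriv u hu).deriv).symm
    have hlw : HasDerivWithinAt w₁ ((p.F (f s)).1) (Iic s) s :=
      hasDerivWithinAt_Iic_of_tendsto_deriv hdiffw hcwl hIooEv hderivwlim
    have hlv : HasDerivWithinAt v₁ ((p.F (f s)).2) (Iic s) s :=
      hasDerivWithinAt_Iic_of_tendsto_deriv hdiffv hcvl hIooEv hderivvlim
    have hw₁s : HasDerivAt w₁ ((p.F (f s)).1) s := by
      have := hlw.union hrw
      rw [Iic_union_Ici] at this
      exact hasDerivWithinAt_univ.1 this
    have hv₁s : HasDerivAt v₁ ((p.F (f s)).2) s := by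
      have := hlv.union hrv
      rw [Iic_union_Ici] at this
      exact hasDerivWithinAt_univ.1 this
    refine ⟨by rw [hwv.1]; exact hL2, by rw [hwv.2]; exact hLv2, ?_, ?_⟩
    · rw [hwv.1, hwv.2]
      rw [hFval] at hw₁s
      exact hw₁s
    · rw [hwv.1, hwv.2]
      rw [hFval] at hv₁s
      exact hv₁s
  · -- right part: the new solution
    have hsIoo : s ∈ Ioo (spr - ε0) (spr + ε0) := by
      constructor
      · linarith
      · have : s < spr + ε := hs.2
        have : ε ≤ ε0 / 2 := min_le_right _ _
        linarith [hs.2]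
    have hdist : dist s spr < δ := by
      rw [Real.dist_eq, abs_of_pos (by linarith : (0:ℝ) < s - spr)]
      have h1 : s < spr + ε := hs.2
      have h2 : ε ≤ δ / 2 := min_le_left _ _
      linarith
    have hK := hδ hdist
    have hfd : HasDerivAt f (p.F (f s)) s := hode s hsIoo
    have hevr : ∀ᶠ t in 𝓝 s, t ∈ Ioi spr := Ioi_mem_nhds hcase
    have hfst : HasDerivAt (fun t => (f t).1) ((p.F (f s)).1) s := by
      have := (ContinuousLinearMap.fst ℝ ℝ ℝ).hasFDerivAt.comp_hasDerivAt s hfd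
      exact this
    have hsnd : HasDerivAt (fun t => (f t).2) ((p.F (f s)).2) s := by
      have := (ContinuousLinearMap.snd ℝ ℝ ℝ).hasFDerivAt.comp_hasDerivAt s hfd
      exact this
    have hw₁d : HasDerivAt w₁ ((p.F (f s)).1) s := by
      refine hfst.congr_of_eventuallyEq ?_
      filter_upwards [hevr] with t ht
      exact hw₁right t (le_of_lt ht)
    have hv₁d : HasDerivAt v₁ ((p.F (f s)).2) s := by
      refine hsnd.congr_of_eventuallyEq ?_
      filter_upwards [hevr] with t ht
      exact hv₁right t (le_of_lt ht)
    have hwself : w₁ s = (f s).1 := hw₁right s hcase.le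
    have hvself : v₁ s = (f s).2 := hv₁right s hcase.le
    refine ⟨by rw [hwself]; exact hK.1, by rw [hvself]; exact hK.2, ?_, ?_⟩
    · rw [hwself, hvself]
      exact hw₁d
    · rw [hwself, hvself]
      exact hv₁d

end FS18

namespace FS18

variable {p : P} {w v : ℝ → ℝ}

lemma P.Good.glue_left (hp : p.Good) {smr spr : ℝ} (hlt : smr < spr)
    (hsol : SolOn p w v (Ioo smr spr))
    {Lv1 L1 : ℝ} (hvt : Tendsto v (𝓝[>] smr) (𝓝 Lv1)) (hwt : Tendsto w (𝓝[>] smr) (𝓝 L1))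
    (hL1 : 0 < L1) (hLv1 : Lv1 ∈ Ioo p.al p.be) :
    ∃ ε > (0:ℝ), ∃ w₁ v₁ : ℝ → ℝ,
      (∀ s ∈ Ioo smr spr, w₁ s = w s ∧ v₁ s = v s) ∧
      SolOn p w₁ v₁ (Ioo (smr - ε) spr) := by
  have hcd : ContDiffAt ℝ 1 p.F ((L1, Lv1) : ℝ × ℝ) := hp.contDiffAt_F hLv1
  obtain ⟨f, hf0, ε0, hε0, hode⟩ := ContDiffAt.exists_forall_mem_closedBall_exists_eq_forall_mem_Ioo_hasDerivAt₀ hcd smr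
  have hsprIoo : smr ∈ Ioo (smr - ε0) (smr + ε0) := by constructor <;> linarith
  have hcontf : ContinuousAt f smr := (hode smr hsprIoo).continuousAt
  have hopen : IsOpen {r : ℝ × ℝ | 0 < r.1 ∧ r.2 ∈ Ioo p.al p.be} :=
    (isOpen_lt continuous_const continuous_fst).inter (isOpen_Ioo.preimage continuous_snd)
  have hmemK : f smr ∈ {r : ℝ × ℝ | 0 < r.1 ∧ r.2 ∈ Ioo p.al p.be} := by
    rw [hf0]; exact ⟨hL1, hLv1⟩
  have hKev : ∀ᶠ t in 𝓝 smr, 0 < (f t).1 ∧ (f t).2 ∈ Ioo p.al p.be :=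
    hcontf.eventually_mem (hopen.mem_nhds hmemK)
  obtain ⟨δ, hδpos, hδ⟩ := Metric.eventually_nhds_iff.1 hKev
  set ε := min (δ / 2) (ε0 / 2) with hε
  have hεpos : 0 < ε := lt_min (by linarith) (by linarith)
  set w₁ : ℝ → ℝ := fun s => if smr < s then w s else (f s).1 with hw₁
  set v₁ : ℝ → ℝ := fun s => if smr < s then v s else (f s).2 with hv₁
  have hw₁left : ∀ u : ℝ, smr < u → w₁ u = w u := fun u hu => if_pos hu
  have hv₁left : ∀ u : ℝ, smr < u → v₁ u = v u := fun u hu => if_pos hu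
  have hw₁right : ∀ u : ℝ, u ≤ smr → w₁ u = (f u).1 := fun u hu => if_neg (not_lt.2 hu)
  have hv₁right : ∀ u : ℝ, u ≤ smr → v₁ u = (f u).2 := fun u hu => if_neg (not_lt.2 hu)
  have hw₁deriv : ∀ u ∈ Ioo smr spr,
      HasDerivAt w₁ (w u * (fsG p.mu p.c (p.a * v u - p.sg) - v u)) u := by
    intro u hu
    refine ((hsol u hu).2.2.1).congr_of_eventuallyEq ?_
    filter_upwards [Ioi_mem_nhds hu.1] with t ht
    exact hw₁left t ht
  have hv₁deriv : ∀ u ∈ Ioo smr spr,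
      HasDerivAt v₁ (p.lam / p.ga - v u ^ 2 - w u / p.ga) u := by
    intro u hu
    refine ((hsol u hu).2.2.2).congr_of_eventuallyEq ?_
    filter_upwards [Ioi_mem_nhds hu.1] with t ht
    exact hv₁left t ht
  have hIooEv : Ioo smr spr ∈ 𝓝[>] smr := Ioo_mem_nhdsGT hlt
  refine ⟨ε, hεpos, w₁, v₁, fun s hs => ⟨hw₁left s hs.1, hv₁left s hs.1⟩, ?_⟩
  intro s hs
  rcases lt_trichotomy smr s with hcase | hcase | hcase
  · have hsIn : s ∈ Ioo smr spr := ⟨hcase, hs.2⟩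
    obtain ⟨h1, h2, h3, h4⟩ := hsol s hsIn
    rw [hw₁left s hcase, hv₁left s hcase]
    exact ⟨h1, h2, hw₁deriv s hsIn, hv₁deriv s hsIn⟩
  · subst hcase
    have hwv : w₁ smr = L1 ∧ v₁ smr = Lv1 := by
      rw [hw₁right smr le_rfl, hv₁right smr le_rfl, hf0]
      exact ⟨rfl, rfl⟩
    have hfd : HasDerivAt f (p.F (f smr)) smr := hode smr hsprIoo
    have hfst : HasDerivAt (fun t => (f t).1) ((p.F (f smr)).1) smr := by
      have := (ContinuousLinearMap.fst ℝ ℝ ℝ).hasFDerivAt.comp_hasDerivAt smr hfd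
      exact this
    have hsnd : HasDerivAt (fun t => (f t).2) ((p.F (f smr)).2) smr := by
      have := (ContinuousLinearMap.snd ℝ ℝ ℝ).hasFDerivAt.comp_hasDerivAt smr hfd
      exact this
    have hFval : p.F (f smr) = (L1 * (fsG p.mu p.c (p.a * Lv1 - p.sg) - Lv1),
        p.lam / p.ga - Lv1 ^ 2 - L1 / p.ga) := by
      rw [hf0]; rfl
    have hrw : HasDerivWithinAt w₁ ((p.F (f smr)).1) (Iic smr) smr :=
      (hfst.hasDerivWithinAt).congr (fun u hu => hw₁right u hu) (hw₁right smr le_rfl)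
    have hrv : HasDerivWithinAt v₁ ((p.F (f smr)).2) (Iic smr) smr :=
      (hsnd.hasDerivWithinAt).congr (fun u hu => hv₁right u hu) (hv₁right smr le_rfl)
    have hdiffw : DifferentiableOn ℝ w₁ (Ioo smr spr) := fun u hu =>
      ((hw₁deriv u hu).differentiableAt).differentiableWithinAt
    have hdiffv : DifferentiableOn ℝ v₁ (Ioo smr spr) := fun u hu =>
      ((hv₁deriv u hu).differentiableAt).differentiableWithinAt
    have hcwl : ContinuousWithinAt w₁ (Ioo smr spr) smr := by
      show Tendsto w₁ (𝓝[Ioo smr spr] smr) (𝓝 (w₁ smr))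
      rw [hwv.1]
      refine ((hwt.mono_left (nhdsWithin_mono _ Ioo_subset_Ioi_self)).congr' ?_)
      filter_upwards [self_mem_nhdsWithin] with u hu
      exact (hw₁left u hu.1).symm
    have hcvl : ContinuousWithinAt v₁ (Ioo smr spr) smr := by
      show Tendsto v₁ (𝓝[Ioo smr spr] smr) (𝓝 (v₁ smr))
      rw [hwv.2]
      refine ((hvt.mono_left (nhdsWithin_mono _ Ioo_subset_Ioi_self)).congr' ?_)
      filter_upwards [self_mem_nhdsWithin] with u hu
      exact (hv₁left u hu.1).symm
    have hderivwlim : Tendsto (deriv w₁) (𝓝[>] smr) (𝓝 ((p.F (f smr)).1)) := by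
      have hfsG : Tendsto (fun u => fsG p.mu p.c (p.a * v u - p.sg)) (𝓝[>] smr)
          (𝓝 (fsG p.mu p.c (p.a * Lv1 - p.sg))) :=
        ((hp.continuousAt_fsG hLv1).tendsto).comp hvt
      have hmain : Tendsto (fun u => w u * (fsG p.mu p.c (p.a * v u - p.sg) - v u)) (𝓝[>] smr)
          (𝓝 (L1 * (fsG p.mu p.c (p.a * Lv1 - p.sg) - Lv1))) := hwt.mul (hfsG.sub hvt)
      rw [hFval]
      refine hmain.congr' ?_
      filter_upwards [hIooEv] with u hu
      exact ((hw₁deriv u hu).deriv).symm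
    have hderivvlim : Tendsto (deriv v₁) (𝓝[>] smr) (𝓝 ((p.F (f smr)).2)) := by
      have hmain : Tendsto (fun u => p.lam / p.ga - v u ^ 2 - w u / p.ga) (𝓝[>] smr)
          (𝓝 (p.lam / p.ga - Lv1 ^ 2 - L1 / p.ga)) :=
        (tendsto_const_nhds.sub (hvt.pow 2)).sub (hwt.div_const p.ga)
      rw [hFval]
      refine hmain.congr' ?_
      filter_upwards [hIooEv] with u hu
      exact ((hv₁deriv u hu).deriv).symm
    have hlw : HasDerivWithinAt w₁ ((p.F (f smr)).1) (Ici smr) smr :=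
      hasDerivWithinAt_Ici_of_tendsto_deriv hdiffw hcwl hIooEv hderivwlim
    have hlv : HasDerivWithinAt v₁ ((p.F (f smr)).2) (Ici smr) smr :=
      hasDerivWithinAt_Ici_of_tendsto_deriv hdiffv hcvl hIooEv hderivvlim
    have hw₁s : HasDerivAt w₁ ((p.F (f smr)).1) smr := by
      have := hrw.union hlw
      rw [Iic_union_Ici] at this
      exact hasDerivWithinAt_univ.1 this
    have hv₁s : HasDerivAt v₁ ((p.F (f smr)).2) smr := by
      have := hrv.union hlv
      rw [Iic_union_Ici] at this
      exact hasDerivWithinAt_univ.1 this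
    refine ⟨by rw [hwv.1]; exact hL1, by rw [hwv.2]; exact hLv1, ?_, ?_⟩
    · rw [hwv.1, hwv.2]
      rw [hFval] at hw₁s
      exact hw₁s
    · rw [hwv.1, hwv.2]
      rw [hFval] at hv₁s
      exact hv₁s
  · have hsIoo : s ∈ Ioo (smr - ε0) (smr + ε0) := by
      have h1 : smr - ε < s := hs.1
      have h2 : ε ≤ ε0 / 2 := min_le_right _ _
      constructor <;> linarith
    have hdist : dist s smr < δ := by
      rw [Real.dist_eq, abs_of_neg (by linarith : s - smr < 0)]
      have h1 : smr - ε < s := hs.1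
      have h2 : ε ≤ δ / 2 := min_le_left _ _
      linarith
    have hK := hδ hdist
    have hfd : HasDerivAt f (p.F (f s)) s := hode s hsIoo
    have hevr : ∀ᶠ t in 𝓝 s, t ∈ Iio smr := Iio_mem_nhds hcase
    have hfst : HasDerivAt (fun t => (f t).1) ((p.F (f s)).1) s := by
      have := (ContinuousLinearMap.fst ℝ ℝ ℝ).hasFDerivAt.comp_hasDerivAt s hfd
      exact this
    have hsnd : HasDerivAt (fun t => (f t).2) ((p.F (f s)).2) s := by
      have := (ContinuousLinearMap.snd ℝ ℝ ℝ).hasFDerivAt.comp_hasDerivAt s hfd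
      exact this
    have hw₁d : HasDerivAt w₁ ((p.F (f s)).1) s := by
      refine hfst.congr_of_eventuallyEq ?_
      filter_upwards [hevr] with t ht
      exact hw₁right t (le_of_lt ht)
    have hv₁d : HasDerivAt v₁ ((p.F (f s)).2) s := by
      refine hsnd.congr_of_eventuallyEq ?_
      filter_upwards [hevr] with t ht
      exact hv₁right t (le_of_lt ht)
    have hwself : w₁ s = (f s).1 := hw₁right s hcase.le
    have hvself : v₁ s = (f s).2 := hv₁right s hcase.le
    refine ⟨by rw [hwself]; exact hK.1, by rw [hvself]; exact hK.2, ?_, ?_⟩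
    · rw [hwself, hvself]
      exact hw₁d
    · rw [hwself, hvself]
      exact hv₁d

end FS18

namespace FS18

variable {p : P} {w v : ℝ → ℝ}

lemma P.Good.extendC1 (hp : p.Good) {smr spr : ℝ} (hlt : smr < spr)
    (hsol : SolOn p w v (Ioo smr spr))
    {L1 L2 : ℝ}
    (hvt1 : Tendsto v (𝓝[>] smr) (𝓝 p.al)) (hvt2 : Tendsto v (𝓝[<] spr) (𝓝 p.be))
    (hwt1 : Tendsto w (𝓝[>] smr) (𝓝 L1)) (hwt2 : Tendsto w (𝓝[<] spr) (𝓝 L2))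
    (hL1 : L1 ≤ p.W / 2) (hL2 : L2 ≤ p.W / 2)
    (hWhalf : ∀ s ∈ Ioo smr spr, w s ≤ p.W / 2) :
    ∃ vbar : ℝ → ℝ, ContDiffOn ℝ 1 vbar (Icc smr spr) ∧
      (∀ s ∈ Ioo smr spr, vbar s = v s) ∧
      (∀ s ∈ Icc smr spr, 0 < derivWithin vbar (Icc smr spr) s) := by
  classical
  set vbar : ℝ → ℝ := fun s => if s ≤ smr then p.al else if s < spr then v s else p.be
    with hvbardef
  set wbar : ℝ → ℝ := fun s => if s ≤ smr then L1 else if s < spr then w s else L2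
    with hwbardef
  set dv : ℝ → ℝ := fun s => p.lam / p.ga - vbar s ^ 2 - wbar s / p.ga with hdvdef
  have hvbar_mid : ∀ s ∈ Ioo smr spr, vbar s = v s := by
    intro s hs
    simp only [hvbardef, if_neg (not_le.2 hs.1), if_pos hs.2]
  have hwbar_mid : ∀ s ∈ Ioo smr spr, wbar s = w s := by
    intro s hs
    simp only [hwbardef, if_neg (not_le.2 hs.1), if_pos hs.2]
  have hvbar_l : vbar smr = p.al := by simp [hvbardef]
  have hvbar_r : vbar spr = p.be := by
    simp only [hvbardef, if_neg (not_le.2 hlt), if_neg (lt_irrefl spr)]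
  have hwbar_l : wbar smr = L1 := by simp [hwbardef]
  have hwbar_r : wbar spr = L2 := by
    simp only [hwbardef, if_neg (not_le.2 hlt), if_neg (lt_irrefl spr)]
  have hIooEv1 : Ioo smr spr ∈ 𝓝[>] smr := Ioo_mem_nhdsGT hlt
  have hIooEv2 : Ioo smr spr ∈ 𝓝[<] spr := Ioo_mem_nhdsLT hlt
  -- derivative of vbar at interior points
  have hvbarD : ∀ s ∈ Ioo smr spr,
      HasDerivAt vbar (p.lam / p.ga - v s ^ 2 - w s / p.ga) s := by
    intro s hs
    refine ((hsol s hs).2.2.2).congr_of_eventuallyEq ?_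
    filter_upwards [Ioo_mem_nhds hs.1 hs.2] with t ht
    exact hvbar_mid t ht
  have hdiffIoo : DifferentiableOn ℝ vbar (Ioo smr spr) := fun u hu =>
    ((hvbarD u hu).differentiableAt).differentiableWithinAt
  -- limits of the interior derivative formula
  have hdlim1 : Tendsto (deriv vbar) (𝓝[>] smr) (𝓝 (p.lam / p.ga - p.al ^ 2 - L1 / p.ga)) := by
    have hmain : Tendsto (fun u => p.lam / p.ga - v u ^ 2 - w u / p.ga) (𝓝[>] smr)
        (𝓝 (p.lam / p.ga - p.al ^ 2 - L1 / p.ga)) :=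
      (tendsto_const_nhds.sub (hvt1.pow 2)).sub (hwt1.div_const p.ga)
    refine hmain.congr' ?_
    filter_upwards [hIooEv1] with u hu
    exact ((hvbarD u hu).deriv).symm
  have hdlim2 : Tendsto (deriv vbar) (𝓝[<] spr) (𝓝 (p.lam / p.ga - p.be ^ 2 - L2 / p.ga)) := by
    have hmain : Tendsto (fun u => p.lam / p.ga - v u ^ 2 - w u / p.ga) (𝓝[<] spr)
        (𝓝 (p.lam / p.ga - p.be ^ 2 - L2 / p.ga)) :=
      (tendsto_const_nhds.sub (hvt2.pow 2)).sub (hwt2.div_const p.ga)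
    refine hmain.congr' ?_
    filter_upwards [hIooEv2] with u hu
    exact ((hvbarD u hu).deriv).symm
  -- continuity of vbar at the endpoints (within Ioo)
  have hcv1 : ContinuousWithinAt vbar (Ioo smr spr) smr := by
    show Tendsto vbar (𝓝[Ioo smr spr] smr) (𝓝 (vbar smr))
    rw [hvbar_l]
    refine ((hvt1.mono_left (nhdsWithin_mono _ Ioo_subset_Ioi_self)).congr' ?_)
    filter_upwards [self_mem_nhdsWithin] with u hu
    exact (hvbar_mid u hu).symm
  have hcv2 : ContinuousWithinAt vbar (Ioo smr spr) spr := by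
    show Tendsto vbar (𝓝[Ioo smr spr] spr) (𝓝 (vbar spr))
    rw [hvbar_r]
    refine ((hvt2.mono_left (nhdsWithin_mono _ Ioo_subset_Iio_self)).congr' ?_)
    filter_upwards [self_mem_nhdsWithin] with u hu
    exact (hvbar_mid u hu).symm
  -- HasDerivWithinAt on the closed interval, everywhere
  have hd : ∀ s ∈ Icc smr spr, HasDerivWithinAt vbar (dv s) (Icc smr spr) s := by
    intro s hs
    rcases eq_or_lt_of_le hs.1 with h1 | h1
    · -- s = smr
      have hval : dv smr = p.lam / p.ga - p.al ^ 2 - L1 / p.ga := by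
        simp only [hdvdef]
        rw [hvbar_l, hwbar_l]
      rw [← h1, hval]
      exact (hasDerivWithinAt_Ici_of_tendsto_deriv hdiffIoo hcv1 hIooEv1 hdlim1).mono
        Icc_subset_Ici_self
    rcases eq_or_lt_of_le hs.2 with h2 | h2
    · -- s = spr
      have hval : dv spr = p.lam / p.ga - p.be ^ 2 - L2 / p.ga := by
        simp only [hdvdef]
        rw [hvbar_r, hwbar_r]
      rw [h2, hval]
      exact (hasDerivWithinAt_Iic_of_tendsto_deriv hdiffIoo hcv2 hIooEv2 hdlim2).mono
        Icc_subset_Iic_self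
    · -- interior
      have hsIoo : s ∈ Ioo smr spr := ⟨h1, h2⟩
      have hval : dv s = p.lam / p.ga - v s ^ 2 - w s / p.ga := by
        rw [hdvdef]
        simp only
        rw [hvbar_mid s hsIoo, hwbar_mid s hsIoo]
      rw [hval]
      exact (hvbarD s hsIoo).hasDerivWithinAt
  have hUD : UniqueDiffOn ℝ (Icc smr spr) := uniqueDiffOn_Icc hlt
  have hdiff : DifferentiableOn ℝ vbar (Icc smr spr) := fun s hs =>
    (hd s hs).differentiableWithinAt
  have hder : ∀ s ∈ Icc smr spr, derivWithin vbar (Icc smr spr) s = dv s := fun s hs =>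
    (hd s hs).derivWithin (hUD s hs)
  -- continuity of wbar on the closed interval
  have hcontw : ContinuousOn wbar (Icc smr spr) := by
    intro s hs
    rcases eq_or_lt_of_le hs.1 with h1 | h1
    · rw [← h1]
      show Tendsto wbar (𝓝[Icc smr spr] smr) (𝓝 (wbar smr))
      rw [hwbar_l, ← Ioc_insert_left hlt.le, nhdsWithin_insert]
      rw [tendsto_sup]
      constructor
      · have : wbar smr = L1 := hwbar_l
        rw [← this]
        exact tendsto_pure_nhds wbar smr
      · have hsubf : Ioc smr spr ⊆ Ioi smr := Ioc_subset_Ioi_self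
        refine ((hwt1.mono_left (nhdsWithin_mono _ hsubf)).congr' ?_)
        filter_upwards [mem_nhdsWithin_of_mem_nhds (Iio_mem_nhds hlt),
          self_mem_nhdsWithin] with u hu1 hu2
        exact (hwbar_mid u ⟨hu2.1, hu1⟩).symm
    rcases eq_or_lt_of_le hs.2 with h2 | h2
    · rw [h2]
      show Tendsto wbar (𝓝[Icc smr spr] spr) (𝓝 (wbar spr))
      rw [hwbar_r, ← Ico_insert_right hlt.le, nhdsWithin_insert]
      rw [tendsto_sup]
      constructor
      · have : wbar spr = L2 := hwbar_r
        rw [← this]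
        exact tendsto_pure_nhds wbar spr
      · have hsubf : Ico smr spr ⊆ Iio spr := Ico_subset_Iio_self
        refine ((hwt2.mono_left (nhdsWithin_mono _ hsubf)).congr' ?_)
        filter_upwards [mem_nhdsWithin_of_mem_nhds (Ioi_mem_nhds hlt),
          self_mem_nhdsWithin] with u hu1 hu2
        exact (hwbar_mid u ⟨hu1, hu2.2⟩).symm
    · have hsIoo : s ∈ Ioo smr spr := ⟨h1, h2⟩
      have hca : ContinuousAt wbar s := by
        have hcw : ContinuousAt w s := (hsol s hsIoo).2.2.1.continuousAt
        apply hcw.congr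
        filter_upwards [Ioo_mem_nhds hsIoo.1 hsIoo.2] with u hu
        exact (hwbar_mid u hu).symm
      exact hca.continuousWithinAt
  have hcontdv : ContinuousOn dv (Icc smr spr) := by
    apply ContinuousOn.sub
    · exact continuousOn_const.sub ((hdiff.continuousOn).pow 2)
    · exact hcontw.div_const p.ga
  -- membership bounds
  have hvbarmem : ∀ s ∈ Icc smr spr, vbar s ∈ Icc p.al p.be := by
    intro s hs
    rcases eq_or_lt_of_le hs.1 with h1 | h1
    · rw [← h1, hvbar_l]; exact left_mem_Icc.2 hp.albe.le
    rcases eq_or_lt_of_le hs.2 with h2 | h2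
    · rw [h2, hvbar_r]; exact right_mem_Icc.2 hp.albe.le
    · rw [hvbar_mid s ⟨h1, h2⟩]
      exact Ioo_subset_Icc_self (hsol s ⟨h1, h2⟩).2.1
  have hwbarle : ∀ s ∈ Icc smr spr, wbar s ≤ p.W / 2 := by
    intro s hs
    rcases eq_or_lt_of_le hs.1 with h1 | h1
    · rw [← h1, hwbar_l]; exact hL1
    rcases eq_or_lt_of_le hs.2 with h2 | h2
    · rw [h2, hwbar_r]; exact hL2
    · rw [hwbar_mid s ⟨h1, h2⟩]
      exact hWhalf s ⟨h1, h2⟩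
  refine ⟨vbar, ?_, hvbar_mid, ?_⟩
  · have h01 : (0 : WithTop ℕ∞) + 1 = 1 := zero_add 1
    rw [← h01, contDiffOn_succ_iff_derivWithin hUD]
    refine ⟨hdiff, by simp, ?_⟩
    rw [contDiffOn_zero]
    exact hcontdv.congr hder
  · intro s hs
    rw [hder s hs]
    have h1 := hp.de_le (hvbarmem s hs)
    have h2 : wbar s / p.ga ≤ p.de / 4 := by
      rw [div_le_iff₀ hp.hga]
      have hW : p.W = p.ga * p.de / 2 := rfl
      have := hwbarle s hs
      rw [hW] at this
      linarith
    have := hp.hde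
    rw [hdvdef]
    simp only
    linarith

end FS18

/-- If `[(σ−c)/a, (σ+c)/a] ⊆ (−v⋆, v⋆)`, there is `w₁* > 0`
such that every maximal solution of (FS) through `(w₀, v₀)` with
`v₀ ∈ ((σ−c)/a, (σ+c)/a)` and `0 < w₀ < w₁*` is defined on a bounded interval
`(s₋, s₊)` and satisfies: (i) `v → (σ−c)/a` at `s₋⁺` and `v → (σ+c)/a` at `s₊⁻`;
(ii) `v` extends to a `C¹` function on `[s₋, s₊]` with positive derivative;
(iii) `w` has finite positive limits at both endpoints; (iv) `w' → −∞` at `s₋⁺`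
and `w' → +∞` at `s₊⁻`. -/
theorem stmt18 (a σ γ lam μ c : ℝ)
    (ha : 0 < a) (hσ : 0 < σ) (hγ : 0 < γ) (hlam : 0 < lam) (hμ : 0 < μ) (hc : 0 < c)
    (hsub : Icc ((σ - c) / a) ((σ + c) / a) ⊆
      Ioo (-Real.sqrt (lam / γ)) (Real.sqrt (lam / γ))) :
    ∃ w1star : ℝ, 0 < w1star ∧
      ∀ v0 : ℝ, v0 ∈ Ioo ((σ - c) / a) ((σ + c) / a) →
      ∀ w0 : ℝ, 0 < w0 → w0 < w1star →
      ∀ (s0 : ℝ) (sm sp : EReal) (w v : ℝ → ℝ),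
        IsMaxFSSol a σ γ lam μ c sm sp w v →
        sm < (s0 : EReal) → (s0 : EReal) < sp →
        w s0 = w0 → v s0 = v0 →
        ∃ smr spr : ℝ, sm = (smr : EReal) ∧ sp = (spr : EReal) ∧ smr < spr ∧
          -- (i)
          Tendsto v (𝓝[>] smr) (𝓝 ((σ - c) / a)) ∧
          Tendsto v (𝓝[<] spr) (𝓝 ((σ + c) / a)) ∧
          -- (ii)
          (∃ vbar : ℝ → ℝ, ContDiffOn ℝ 1 vbar (Icc smr spr) ∧
            (∀ s ∈ Ioo smr spr, vbar s = v s) ∧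
            (∀ s ∈ Icc smr spr, 0 < derivWithin vbar (Icc smr spr) s)) ∧
          -- (iii)
          (∃ L1 : ℝ, 0 < L1 ∧ Tendsto w (𝓝[>] smr) (𝓝 L1)) ∧
          (∃ L2 : ℝ, 0 < L2 ∧ Tendsto w (𝓝[<] spr) (𝓝 L2)) ∧
          -- (iv)
          Tendsto (deriv w) (𝓝[>] smr) atBot ∧
          Tendsto (deriv w) (𝓝[<] spr) atTop := by
  
  classical
  set p : FS18.P := ⟨a, σ, γ, lam, μ, c⟩ with hpdef
  have hp : p.Good := ⟨ha, hσ, hγ, hlam, hμ, hc, hsub⟩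
  refine ⟨p.wst, hp.hwst, ?_⟩
  intro v0 hv0 w0 hw0pos hw0lt s0 sm sp w v hmax hsm0 hs0p hws0 hvs0
  obtain ⟨⟨hsmsp, hsolraw⟩, hmaxP⟩ := hmax
  set D : Set ℝ := {s : ℝ | sm < (s : EReal) ∧ (s : EReal) < sp} with hDdef
  have hsolD : FS18.SolOn p w v D := by
    intro s hs
    obtain ⟨h1, h2, h3, h4, h5⟩ := hsolraw s hs.1 hs.2
    exact ⟨h1, ⟨h2, h3⟩, h4, h5⟩
  have hs0D : s0 ∈ D := ⟨hsm0, hs0p⟩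
  have hIccD : ∀ {x y : ℝ}, x ∈ D → y ∈ D → Icc x y ⊆ D := by
    intro x y hx hy u hu
    exact ⟨lt_of_lt_of_le hx.1 (EReal.coe_le_coe_iff.2 hu.1),
      lt_of_le_of_lt (EReal.coe_le_coe_iff.2 hu.2) hy.2⟩
  have hwst0 : w s0 < p.wst := by rw [hws0]; exact hw0lt
  have hWhalf : ∀ s ∈ D, w s ≤ p.W / 2 := by
    intro s hs
    rcases le_total s0 s with h | h
    · exact hp.wBound_right h (hsolD.mono (hIccD hs0D hs)) hwst0 s (right_mem_Icc.2 h)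
    · exact hp.wBound_left h (hsolD.mono (hIccD hs hs0D)) hwst0 s (left_mem_Icc.2 h)
  have hV' : ∀ s ∈ D, p.de / 2 ≤ p.lam / p.ga - v s ^ 2 - w s / p.ga :=
    hp.vderiv_lb hsolD hWhalf
  -- a priori bounds on the interval of definition
  have hmonoAux : ∀ {x y : ℝ}, x ∈ D → y ∈ D → x ≤ y →
      MonotoneOn (fun t => v t - p.de / 2 * t) (Icc x y) := by
    intro x y hx hy hxy
    have hIcc := hIccD hx hy
    apply monotoneOn_of_deriv_nonneg (convex_Icc x y)
    · exact ((hsolD.mono hIcc).contV).sub (Continuous.continuousOn (by continuity))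
    · intro t ht
      rw [interior_Icc] at ht
      have htD : t ∈ D := hIcc (Ioo_subset_Icc_self ht)
      have hlin : HasDerivAt (fun u : ℝ => p.de / 2 * u) (p.de / 2) t := by
        simpa using (hasDerivAt_id t).const_mul (p.de / 2)
      exact (((hsolD t htD).2.2.2).sub hlin).differentiableAt.differentiableWithinAt
    · intro t ht
      rw [interior_Icc] at ht
      have htD : t ∈ D := hIcc (Ioo_subset_Icc_self ht)
      have hlin : HasDerivAt (fun u : ℝ => p.de / 2 * u) (p.de / 2) t := by
        simpa using (hasDerivAt_id t).const_mul (p.de / 2)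
      have hdt := ((hsolD t htD).2.2.2).sub hlin
      rw [show (fun t => v t - p.de / 2 * t) = (v - fun u => p.de / 2 * u) from rfl, hdt.deriv]
      have := hV' t htD
      linarith
  have hgap : ∀ {x y : ℝ}, x ∈ D → y ∈ D → x ≤ y →
      y - x ≤ (p.be - p.al) * (2 / p.de) := by
    intro x y hx hy hxy
    have hm := hmonoAux hx hy hxy (left_mem_Icc.2 hxy) (right_mem_Icc.2 hxy) hxy
    simp only at hm
    have hb1 : v y < p.be := (hsolD y hy).2.1.2
    have hb2 : p.al < v x := (hsolD x hx).2.1.1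
    have h3 : p.de / 2 * (y - x) ≤ p.be - p.al := by nlinarith
    have hde := hp.hde
    calc y - x = p.de / 2 * (y - x) * (2 / p.de) := by field_simp
    _ ≤ (p.be - p.al) * (2 / p.de) := mul_le_mul_of_nonneg_right h3 (by positivity)
  have hspne : sp ≠ ⊤ := by
    intro htop
    set s := s0 + (p.be - p.al) * (2 / p.de) + 1 with hsdef
    have hgap0 : 0 ≤ (p.be - p.al) * (2 / p.de) :=
      mul_nonneg (by linarith [hp.albe]) (div_nonneg (by norm_num) hp.hde.le)
    have hs0s : s0 < s := by rw [hsdef]; linarith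
    have hsD : s ∈ D := by
      refine ⟨lt_trans hsm0 ?_, ?_⟩
      · exact_mod_cast hs0s
      · rw [htop]; exact EReal.coe_lt_top s
    have := hgap hs0D hsD hs0s.le
    rw [hsdef] at this
    linarith
  have hsmne : sm ≠ ⊥ := by
    intro hbot
    set s := s0 - (p.be - p.al) * (2 / p.de) - 1 with hsdef
    have hgap0 : 0 ≤ (p.be - p.al) * (2 / p.de) :=
      mul_nonneg (by linarith [hp.albe]) (div_nonneg (by norm_num) hp.hde.le)
    have hss0 : s < s0 := by rw [hsdef]; linarith
    have hsD : s ∈ D := by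
      refine ⟨?_, lt_trans ?_ hs0p⟩
      · rw [hbot]; exact EReal.bot_lt_coe s
      · exact_mod_cast hss0
    have := hgap hsD hs0D hss0.le
    rw [hsdef] at this
    linarith
  have hsmne' : sm ≠ ⊤ := ne_top_of_lt hsm0
  have hspne' : sp ≠ ⊥ := by
    intro hbot
    rw [hbot] at hs0p
    exact absurd hs0p (by simp)
  set smr := sm.toReal with hsmrdef
  set spr := sp.toReal with hsprdef
  have hsm : sm = (smr : EReal) := (EReal.coe_toReal hsmne' hsmne).symm
  have hsp : sp = (spr : EReal) := (EReal.coe_toReal hspne hspne').symm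
  have hDIoo : D = Ioo smr spr := by
    ext u
    simp only [hDdef, mem_setOf_eq, mem_Ioo, hsm, hsp, EReal.coe_lt_coe_iff]
  have hsolJ : FS18.SolOn p w v (Ioo smr spr) := hDIoo ▸ hsolD
  have hs0J : s0 ∈ Ioo smr spr := hDIoo ▸ hs0D
  have hWhalfJ : ∀ s ∈ Ioo smr spr, w s ≤ p.W / 2 := hDIoo ▸ hWhalf
  have hlt : smr < spr := lt_trans hs0J.1 hs0J.2
  obtain ⟨Lv1, Lv2, L1, L2, hLv1a, hLv1v0, hv0Lv2, hLv2b, hvt1, hvt2,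
    hL1pos, hL1le, hwt1, hL2pos, hL2le, hwt2⟩ := hp.limits hs0J hsolJ hWhalfJ hwst0
  -- attainment of the right endpoint
  have hLv2eq : Lv2 = p.be := by
    by_contra hne
    have hLv2mem : Lv2 ∈ Ioo p.al p.be :=
      ⟨lt_of_lt_of_le (hsolJ s0 hs0J).2.1.1 hv0Lv2, lt_of_le_of_ne hLv2b hne⟩
    obtain ⟨ε, hε, w₁, v₁, hagree, hsol₁⟩ := hp.glue_right hlt hsolJ hvt2 hwt2 hL2pos hLv2mem
    refine hmaxP sm (↑(spr + ε)) w₁ v₁ le_rfl ?_ ?_ ?_ ?_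
    · rw [hsp]
      exact EReal.coe_le_coe_iff.2 (by linarith)
    · right
      rw [hsp]
      exact EReal.coe_lt_coe_iff.2 (by linarith)
    · intro s h1 h2
      apply hagree
      rw [← hDIoo]
      exact ⟨h1, h2⟩
    · constructor
      · rw [hsm]
        exact EReal.coe_lt_coe_iff.2 (by linarith)
      · intro s h1 h2
        have hsIn : s ∈ Ioo smr (spr + ε) := by
          rw [hsm] at h1
          constructor
          · exact EReal.coe_lt_coe_iff.1 h1
          · exact EReal.coe_lt_coe_iff.1 h2
        obtain ⟨c1, c2, c3, c4⟩ := hsol₁ s hsIn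
        exact ⟨c1, c2.1, c2.2, c3, c4⟩
  have hLv1eq : Lv1 = p.al := by
    by_contra hne
    have hLv1mem : Lv1 ∈ Ioo p.al p.be :=
      ⟨lt_of_le_of_ne hLv1a (Ne.symm hne), lt_of_le_of_lt hLv1v0 (hsolJ s0 hs0J).2.1.2⟩
    obtain ⟨ε, hε, w₁, v₁, hagree, hsol₁⟩ := hp.glue_left hlt hsolJ hvt1 hwt1 hL1pos hLv1mem
    refine hmaxP (↑(smr - ε)) sp w₁ v₁ ?_ le_rfl ?_ ?_ ?_
    · rw [hsm]
      exact EReal.coe_le_coe_iff.2 (by linarith)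
    · left
      rw [hsm]
      exact EReal.coe_lt_coe_iff.2 (by linarith)
    · intro s h1 h2
      apply hagree
      rw [← hDIoo]
      exact ⟨h1, h2⟩
    · constructor
      · rw [hsp]
        exact EReal.coe_lt_coe_iff.2 (by linarith)
      · intro s h1 h2
        have hsIn : s ∈ Ioo (smr - ε) spr := by
          rw [hsp] at h2
          constructor
          · exact EReal.coe_lt_coe_iff.1 h1
          · exact EReal.coe_lt_coe_iff.1 h2
        obtain ⟨c1, c2, c3, c4⟩ := hsol₁ s hsIn
        exact ⟨c1, c2.1, c2.2, c3, c4⟩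
  have hvt1' : Tendsto v (𝓝[>] smr) (𝓝 p.al) := hLv1eq ▸ hvt1
  have hvt2' : Tendsto v (𝓝[<] spr) (𝓝 p.be) := hLv2eq ▸ hvt2
  have hIooEv1 : Ioo smr spr ∈ 𝓝[>] smr := Ioo_mem_nhdsGT hlt
  have hIooEv2 : Ioo smr spr ∈ 𝓝[<] spr := Ioo_mem_nhdsLT hlt
  -- derivative blow-up, right end
  have hcomp2 : Tendsto (fun s => p.a * v s - p.sg) (𝓝[<] spr) (𝓝[Ioo (-p.c) p.c] p.c) := by
    rw [tendsto_nhdsWithin_iff]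
    constructor
    · have hval : p.a * p.be - p.sg = p.c := by
        show a * ((σ + c) / a) - σ = c
        field_simp
        ring
      rw [← hval]
      exact (tendsto_const_nhds.mul hvt2').sub tendsto_const_nhds
    · filter_upwards [hIooEv2] with s hs
      have h1 := (hsolJ s hs).2.1.1
      have h2 := (hsolJ s hs).2.1.2
      have h1' : p.sg - p.c < p.a * v s := by
        have := (div_lt_iff₀ hp.ha).1 h1
        linarith
      have h2' : p.a * v s < p.sg + p.c := by
        have := (lt_div_iff₀ hp.ha).1 h2
        linarith
      exact ⟨by linarith, by linarith⟩
  have hcomp1 : Tendsto (fun s => p.a * v s - p.sg) (𝓝[>] smr) (𝓝[Ioo (-p.c) p.c] (-p.c)) := by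
    rw [tendsto_nhdsWithin_iff]
    constructor
    · have hval : p.a * p.al - p.sg = -p.c := by
        show a * ((σ - c) / a) - σ = -c
        field_simp
        ring
      rw [← hval]
      exact (tendsto_const_nhds.mul hvt1').sub tendsto_const_nhds
    · filter_upwards [hIooEv1] with s hs
      have h1 := (hsolJ s hs).2.1.1
      have h2 := (hsolJ s hs).2.1.2
      have h1' : p.sg - p.c < p.a * v s := by
        have := (div_lt_iff₀ hp.ha).1 h1
        linarith
      have h2' : p.a * v s < p.sg + p.c := by
        have := (lt_div_iff₀ hp.ha).1 h2
        linarith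
      exact ⟨by linarith, by linarith⟩
  have hfsGtop : Tendsto (fun s => fsG p.mu p.c (p.a * v s - p.sg)) (𝓝[<] spr) atTop :=
    (FS18.tendsto_fsG_atTop hp.hmu hp.hc).comp hcomp2
  have hfsGbot : Tendsto (fun s => fsG p.mu p.c (p.a * v s - p.sg)) (𝓝[>] smr) atBot :=
    (FS18.tendsto_fsG_atBot hp.hmu hp.hc).comp hcomp1
  have hsubTop : Tendsto (fun s => fsG p.mu p.c (p.a * v s - p.sg) - v s) (𝓝[<] spr) atTop := by
    apply tendsto_atTop_mono' _ _ (tendsto_atTop_add_const_right _ (-p.be) hfsGtop)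
    filter_upwards [hIooEv2] with s hs
    have h2 := (hsolJ s hs).2.1.2
    show fsG p.mu p.c (p.a * v s - p.sg) + -p.be ≤ fsG p.mu p.c (p.a * v s - p.sg) - v s
    linarith
  have hsubBot : Tendsto (fun s => fsG p.mu p.c (p.a * v s - p.sg) - v s) (𝓝[>] smr) atBot := by
    apply tendsto_atBot_mono' _ _ (tendsto_atBot_add_const_right _ (-p.al) hfsGbot)
    filter_upwards [hIooEv1] with s hs
    have h1 := (hsolJ s hs).2.1.1
    show fsG p.mu p.c (p.a * v s - p.sg) - v s ≤ fsG p.mu p.c (p.a * v s - p.sg) + -p.al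
    linarith
  have hdwTop : Tendsto (deriv w) (𝓝[<] spr) atTop := by
    refine (hwt2.pos_mul_atTop hL2pos hsubTop).congr' ?_
    filter_upwards [hIooEv2] with s hs
    exact ((hsolJ s hs).2.2.1.deriv).symm
  have hdwBot : Tendsto (deriv w) (𝓝[>] smr) atBot := by
    refine (hwt1.pos_mul_atBot hL1pos hsubBot).congr' ?_
    filter_upwards [hIooEv1] with s hs
    exact ((hsolJ s hs).2.2.1.deriv).symm
  obtain ⟨vbar, hvbar1, hvbar2, hvbar3⟩ :=
    hp.extendC1 hlt hsolJ hvt1' hvt2' hwt1 hwt2 hL1le hL2le hWhalfJ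
  exact ⟨smr, spr, hsm, hsp, hlt, hvt1', hvt2', ⟨vbar, hvbar1, hvbar2, hvbar3⟩,
    ⟨L1, hL1pos, hwt1⟩, ⟨L2, hL2pos, hwt2⟩, hdwBot, hdwTop⟩
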